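/- arXiv:1911.02137 — 8 statements merged into one kernel-verified Lean document; each statement's English description precedes it below -/
import Mathlib

section
/- Let n = 3·2^s with s ≥ 2, ζ = ζ_n a primitive n-th root of unity, and F_n = ℚ(ζ + ζ⁻¹). Then p'_n := 1 + ζ + ζ⁻¹ satisfies N_{F_n/ℚ}(p'_n) = -2 and N_{F_n/ℚ}(p'_n - 2) = -2, and p'_n generates the unique prime ideal of F_n above 2. -/
/-!
Write `θ = ζ + ζ⁻¹`, `d = 2^(s-1)` and `D_d` for the Dickson polynomial with
`D_d(x + x⁻¹) = x^d + x^(-d)`. Since `ζ^d` is a primitive sixth root of unity, `θ` is a root of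
`D_d - 1`, and as `[ℚ(ζ) : ℚ] = φ(n) = 2d ≤ 2 [F : ℚ]` this is the minimal polynomial of `θ`. The
norms of `θ ± 1` are its values at `∓1`, and both are `-2` because `D_{2^j}(±1) = -1` for `j ≥ 1`
(`D_{2m} = D_m² - 2`). An integer of norm `±2` generates a prime ideal. Modulo a prime above `2`,
`D_d` becomes `X^d`, so `(θ + 1)^d = θ^d + 1 = 2 = 0`: every prime above `2` contains `1 + θ`.
-/

open Polynomial IntermediateField Module NumberField

namespace Polynomial

variable {R : Type*} [CommRing R] (k : ℕ) (a : R)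

theorem natDegree_dickson_le : ∀ n, (dickson k a n).natDegree ≤ n
  | 0 => by
    rw [dickson_zero]
    exact natDegree_sub_le_of_le (natDegree_ofNat 3).le (natDegree_natCast k).le
  | 1 => by rw [dickson_one]; exact natDegree_X_le
  | n + 2 => by
    rw [dickson_add_two]
    refine (natDegree_sub_le _ _).trans (max_le ?_ ?_)
    · exact (natDegree_mul_le_of_le natDegree_X_le (natDegree_dickson_le (n + 1))).trans
        (by omega)
    · exact (natDegree_C_mul_le _ _).trans ((natDegree_dickson_le n).trans (by omega))

theorem coeff_dickson_self : ∀ {n}, n ≠ 0 → (dickson k a n).coeff n = 1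
  | 1, _ => by simp
  | n + 2, _ => by
    rw [dickson_add_two, coeff_sub, coeff_X_mul, coeff_dickson_self n.succ_ne_zero, coeff_C_mul,
      coeff_eq_zero_of_natDegree_lt ((natDegree_dickson_le k a n).trans_lt (by omega)), mul_zero,
      sub_zero]

theorem dickson_monic {n : ℕ} (hn : n ≠ 0) : (dickson k a n).Monic :=
  monic_of_natDegree_le_of_coeff_eq_one n (natDegree_dickson_le k a n) (coeff_dickson_self k a hn)

theorem natDegree_dickson [Nontrivial R] {n : ℕ} (hn : n ≠ 0) : (dickson k a n).natDegree = n :=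
  natDegree_eq_of_le_of_coeff_ne_zero (natDegree_dickson_le k a n)
    (by rw [coeff_dickson_self k a hn]; exact one_ne_zero)

theorem dickson_sub_one_monic [Nontrivial R] {n : ℕ} (hn : n ≠ 0) :
    (dickson k a n - 1).Monic := by
  refine (dickson_monic k a hn).sub_of_left ?_
  rw [degree_one, degree_eq_natDegree (dickson_monic k a hn).ne_zero, natDegree_dickson k a hn]
  exact_mod_cast Nat.pos_of_ne_zero hn

theorem natDegree_dickson_sub_one [Nontrivial R] {n : ℕ} (hn : n ≠ 0) :
    (dickson k a n - 1).natDegree = n := by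
  have hdeg := natDegree_dickson k a hn
  rw [natDegree_sub_eq_left_of_natDegree_lt (by rw [natDegree_one]; omega), hdeg]

theorem aeval_dickson {A : Type*} [CommRing A] [Algebra R A] (x : A) (n : ℕ) :
    aeval x (dickson k a n) = (dickson k (algebraMap R A a) n).eval x := by
  rw [aeval_def, eval₂_eq_eval_map, map_dickson]

theorem map_eval_dickson {S : Type*} [CommRing S] (f : R →+* S) (n : ℕ) (x : R) :
    f ((dickson k a n).eval x) = (dickson k (f a) n).eval (f x) := by
  rw [← map_dickson, eval_map, eval₂_at_apply]

variable (R) in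
theorem dickson_one_one_two_mul (n : ℕ) :
    dickson 1 (1 : R) (2 * n) = dickson 1 1 n ^ 2 - 2 := by
  rw [dickson_one_one_mul, dickson_two]
  norm_num

theorem eval_dickson_one_one_two_pow {x : R} (hx : x ^ 2 = 1) {m : ℕ} (hm : m ≠ 0) :
    (dickson 1 (1 : R) (2 ^ m)).eval x = -1 := by
  obtain ⟨m, rfl⟩ : ∃ j, m = j + 1 := ⟨m - 1, by omega⟩
  induction m with
  | zero => rw [zero_add, pow_one, dickson_two]; norm_num [hx]
  | succ m ih =>
    rw [pow_succ', dickson_one_one_two_mul, eval_sub, eval_pow, ih m.succ_ne_zero]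
    norm_num

theorem dickson_one_one_two_pow_of_charP [CharP R 2] (m : ℕ) :
    dickson 1 (1 : R) (2 ^ m) = X ^ 2 ^ m := by
  have : Fact (Nat.Prime 2) := ⟨Nat.prime_two⟩
  induction m with
  | zero => simp
  | succ m ih =>
    rw [pow_succ, dickson_one_one_mul, ih, dickson_one_one_charP, X_pow_comp, ← pow_mul, mul_comm]

theorem add_one_eq_zero_of_eval_dickson_two_pow [IsReduced R] [CharP R 2] {t : R} {m : ℕ}
    (ht : (dickson 1 (1 : R) (2 ^ m)).eval t = 1) : t + 1 = 0 := by
  rw [dickson_one_one_two_pow_of_charP, eval_pow, eval_X] at ht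
  refine IsNilpotent.eq_zero ⟨2 ^ m, ?_⟩
  rw [add_pow_char_pow, ht, one_pow, CharTwo.add_self_eq_zero]

theorem add_one_mem_of_eval_dickson_two_pow {P : Ideal R} [P.IsPrime] (h2 : (2 : R) ∈ P)
    {t : R} {m : ℕ} (ht : (dickson 1 (1 : R) (2 ^ m)).eval t = 1) : t + 1 ∈ P := by
  have : CharP (R ⧸ P) 2 :=
    (CharP.charP_iff_prime_eq_zero Nat.prime_two).mpr (Ideal.Quotient.eq_zero_iff_mem.mpr h2)
  rw [← Ideal.Quotient.eq_zero_iff_mem, map_add, map_one]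
  refine add_one_eq_zero_of_eval_dickson_two_pow (m := m) ?_
  rw [← map_one (Ideal.Quotient.mk P), ← map_eval_dickson, ht, map_one]

end Polynomial

theorem Algebra.norm_eq_neg_one_pow_mul_coeff_zero_minpoly {K L : Type*} [Field K] [Field L]
    [Algebra K L] [FiniteDimensional K L] {x : L}
    (hx : (minpoly K x).natDegree = finrank K L) :
    Algebra.norm K x = (-1) ^ finrank K L * (minpoly K x).coeff 0 := by
  have hint : IsIntegral K x := .of_finite K x
  have hrank : finrank K⟮x⟯ L = 1 := by
    have := finrank_mul_finrank K K⟮x⟯ L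
    rw [adjoin.finrank hint, hx] at this
    exact (Nat.mul_eq_left finrank_pos.ne').mp this
  have hgen : Algebra.norm K (AdjoinSimple.gen K x) =
      (-1) ^ (minpoly K x).natDegree * (minpoly K (AdjoinSimple.gen K x)).coeff 0 :=
    PowerBasis.norm_gen_eq_coeff_zero_minpoly (IntermediateField.adjoin.powerBasis hint)
  rw [norm_eq_norm_adjoin, hrank, pow_one, hgen, minpoly_gen, hx]

namespace IntermediateField

variable {K L : Type*} [Field K] [Field L] [Algebra K L]

theorem AdjoinSimple.norm_gen_add_algebraMap {x : L} (hx : IsIntegral K x) (c : K) :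
    Algebra.norm K (AdjoinSimple.gen K x + algebraMap K K⟮x⟯ c) =
      (-1) ^ (minpoly K x).natDegree * (minpoly K x).eval (-c) := by
  have := adjoin.finiteDimensional hx
  have hmin : minpoly K (AdjoinSimple.gen K x + algebraMap K K⟮x⟯ c) =
      (minpoly K x).comp (X - C c) := by
    rw [minpoly.add_algebraMap, minpoly_gen]
  have hdeg : (minpoly K x).natDegree = finrank K K⟮x⟯ := (adjoin.finrank hx).symm
  rw [Algebra.norm_eq_neg_one_pow_mul_coeff_zero_minpoly, hmin, coeff_zero_eq_eval_zero,
    eval_comp, ← hdeg]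
  · simp
  · rw [hmin, natDegree_comp, natDegree_X_sub_C, mul_one, hdeg]

theorem finrank_adjoin_le_two_mul_finrank_adjoin_add_inv {x : L} (hx : IsIntegral K x)
    (hx0 : x ≠ 0) : finrank K K⟮x⟯ ≤ 2 * finrank K K⟮x + x⁻¹⟯ := by
  set E := K⟮x + x⁻¹⟯
  have hquad : aeval x (X ^ 2 - C (AdjoinSimple.gen K (x + x⁻¹)) * X + 1 : E[X]) = 0 := by
    simp only [map_add, map_sub, map_pow, map_mul, aeval_X, aeval_C, map_one,
      IntermediateField.algebraMap_apply, AdjoinSimple.coe_gen]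
    field_simp
    ring
  have hdeg : (X ^ 2 - C (AdjoinSimple.gen K (x + x⁻¹)) * X + 1 : E[X]).natDegree = 2 := by
    compute_degree!
  have hrel : finrank E E⟮x⟯ ≤ 2 := by
    rw [adjoin.finrank hx.tower_top, ← hdeg]
    exact natDegree_le_of_dvd (minpoly.dvd _ _ hquad) (by rintro h; simp [h] at hdeg)
  have htower : (E⟮x⟯).restrictScalars K = K⟮x⟯ := by
    have hxmem := mem_adjoin_simple_self K x
    rw [adjoin_adjoin_left]
    refine le_antisymm (adjoin_le_iff.mpr ?_) (adjoin.mono _ _ _ Set.subset_union_right)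
    rintro y (rfl | rfl)
    exacts [add_mem hxmem (inv_mem hxmem), hxmem]
  calc finrank K K⟮x⟯ = finrank K E * finrank E E⟮x⟯ := by
        rw [← htower, finrank_mul_finrank]; rfl
    _ ≤ 2 * finrank K E := by rw [mul_comm]; exact Nat.mul_le_mul_right _ hrel

end IntermediateField

namespace NumberField.RingOfIntegers

variable {K : Type*} [Field K] [NumberField K] {x : 𝓞 K}

theorem isPrime_span_singleton_of_prime_natAbs_norm (hx : (Algebra.norm ℤ x).natAbs.Prime) :
    (Ideal.span {x}).IsPrime :=
  Ideal.isPrime_of_irreducible_absNorm (by rwa [Ideal.absNorm_span_singleton])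

theorem eq_span_singleton_of_prime_natAbs_norm (hx : (Algebra.norm ℤ x).natAbs.Prime)
    {P : Ideal (𝓞 K)} [hP : P.IsPrime] (hxP : x ∈ P) : P = Ideal.span {x} := by
  have hne : Ideal.span {x} ≠ ⊥ := by
    rw [Ne, Ideal.span_singleton_eq_bot]
    rintro rfl
    simp [Nat.not_prime_zero] at hx
  exact (((isPrime_span_singleton_of_prime_natAbs_norm hx).isMaximal hne).eq_of_le hP.ne_top
    ((Ideal.span_singleton_le_iff_mem _).mpr hxP)).symm

end NumberField.RingOfIntegers

namespace IsPrimitiveRoot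

variable {L : Type*} [Field L]

theorem add_inv_eq_one_of_six {y : L} (hy : IsPrimitiveRoot y 6) : y + y⁻¹ = 1 := by
  have hroot := hy.isRoot_cyclotomic (by norm_num)
  rw [cyclotomic_six, IsRoot, eval_add, eval_sub, eval_pow, eval_X, eval_one] at hroot
  have hy0 : y ≠ 0 := hy.ne_zero (by norm_num)
  field_simp
  linear_combination hroot

variable {ζ : L} {k : ℕ}

theorem isIntegral_add_inv {n : ℕ} (hζ : IsPrimitiveRoot ζ n) (hn : 0 < n) :
    IsIntegral ℤ (ζ + ζ⁻¹) :=
  (hζ.isIntegral hn).add (hζ.inv.isIntegral hn)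

theorem eval_dickson_one_one_add_inv (hζ : IsPrimitiveRoot ζ (6 * 2 ^ k)) :
    (dickson 1 (1 : L) (2 ^ k)).eval (ζ + ζ⁻¹) = 1 := by
  have hpos : 0 < 6 * 2 ^ k := by positivity
  rw [dickson_one_one_eval_add_inv _ _ (mul_inv_cancel₀ (hζ.ne_zero hpos.ne')), inv_pow]
  exact (hζ.pow hpos (mul_comm _ _)).add_inv_eq_one_of_six

theorem add_one_mem_of_two_mem (hζ : IsPrimitiveRoot ζ (6 * 2 ^ k)) {R : Type*} [CommRing R]
    {f : R →+* L} (hf : Function.Injective f) {t : R} (ht : f t = ζ + ζ⁻¹) {P : Ideal R}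
    [P.IsPrime] (h2 : (2 : R) ∈ P) : t + 1 ∈ P := by
  refine add_one_mem_of_eval_dickson_two_pow h2 (m := k) (hf ?_)
  rw [map_eval_dickson, map_one, ht, hζ.eval_dickson_one_one_add_inv]

theorem eq_span_singleton_of_two_mem (hζ : IsPrimitiveRoot ζ (6 * 2 ^ k)) {K : Type*} [Field K]
    [NumberField K] (σ : K →+* L) {x : 𝓞 K} (hσx : σ x = 1 + ζ + ζ⁻¹)
    (hx : (Algebra.norm ℤ x).natAbs.Prime) {P : Ideal (𝓞 K)} [P.IsPrime] (h2 : (2 : 𝓞 K) ∈ P) :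
    P = Ideal.span {x} := by
  refine RingOfIntegers.eq_span_singleton_of_prime_natAbs_norm hx ?_
  have hinj : Function.Injective (σ.comp (algebraMap (𝓞 K) K)) :=
    σ.injective.comp RingOfIntegers.coe_injective
  have ht : σ.comp (algebraMap (𝓞 K) K) (x - 1) = ζ + ζ⁻¹ := by
    rw [map_sub, map_one, RingHom.comp_apply, hσx]
    ring
  simpa using hζ.add_one_mem_of_two_mem hinj ht h2

variable [CharZero L]

theorem finrank_adjoin_rat {n : ℕ} (hn : 0 < n) (hζ : IsPrimitiveRoot ζ n) :
    finrank ℚ ℚ⟮ζ⟯ = n.totient := by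
  rw [adjoin.finrank (hζ.isIntegral hn).tower_top, ← cyclotomic_eq_minpoly_rat hζ hn,
    natDegree_cyclotomic]

theorem minpoly_add_inv_eq_dickson (hζ : IsPrimitiveRoot ζ (6 * 2 ^ k)) :
    minpoly ℚ (ζ + ζ⁻¹) = dickson 1 1 (2 ^ k) - 1 := by
  have hpos : 0 < 6 * 2 ^ k := by positivity
  have hk : 2 ^ k ≠ 0 := by positivity
  have hroot : aeval (ζ + ζ⁻¹) (dickson 1 (1 : ℚ) (2 ^ k) - 1) = 0 := by
    rw [map_sub, aeval_dickson, map_one, map_one, hζ.eval_dickson_one_one_add_inv, sub_self]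
  have hmonic := dickson_sub_one_monic 1 (1 : ℚ) hk
  have hint : IsIntegral ℚ (ζ + ζ⁻¹) := ⟨_, hmonic, hroot⟩
  have htotient : (6 * 2 ^ k).totient = 2 * 2 ^ k := by
    rw [show 6 * 2 ^ k = 3 * 2 ^ (k + 1) by ring, Nat.totient_mul (by norm_num),
      Nat.totient_prime Nat.prime_three, Nat.totient_prime_pow_succ Nat.prime_two]
    ring
  have hle : 2 * 2 ^ k ≤ 2 * (minpoly ℚ (ζ + ζ⁻¹)).natDegree := by
    rw [← htotient, ← hζ.finrank_adjoin_rat hpos, ← adjoin.finrank hint]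
    exact finrank_adjoin_le_two_mul_finrank_adjoin_add_inv (hζ.isIntegral hpos).tower_top
      (hζ.ne_zero hpos.ne')
  exact (eq_of_monic_of_dvd_of_natDegree_le (minpoly.monic hint) hmonic
    (minpoly.dvd ℚ _ hroot) (by rw [natDegree_dickson_sub_one 1 1 hk]; omega)).symm

theorem norm_add_add_inv_eq_neg_two (hζ : IsPrimitiveRoot ζ (6 * 2 ^ k)) (hk : k ≠ 0) {c : ℚ}
    (hc : c ^ 2 = 1) {y : ℚ⟮ζ + ζ⁻¹⟯} (hy : (y : L) = c + ζ + ζ⁻¹) : Algebra.norm ℚ y = -2 := by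
  obtain rfl : y = AdjoinSimple.gen ℚ (ζ + ζ⁻¹) + algebraMap ℚ _ c :=
    Subtype.ext (by simp [hy, add_rotate])
  -- not `rw`: the `Algebra ℚ` instance on `ℚ⟮ζ + ζ⁻¹⟯` here is `DivisionRing.toRatAlgebra`, the
  -- lemma's is `IntermediateField.algebra'`; they agree only up to unfolding
  refine (AdjoinSimple.norm_gen_add_algebraMap (hζ.isIntegral_add_inv (by positivity)).tower_top
    c).trans ?_
  rw [hζ.minpoly_add_inv_eq_dickson, natDegree_dickson_sub_one _ _ (by positivity),
    (Nat.even_pow.mpr ⟨even_two, hk⟩).neg_one_pow, eval_sub,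
    eval_dickson_one_one_two_pow (by rwa [neg_sq]) hk]
  norm_num

end IsPrimitiveRoot

theorem one_add_zeta_generates_prime_above_two_general (s : ℕ) (hs : 2 ≤ s) (n : ℕ)
    (hn : n = 3 * 2 ^ s) (ζ : ℂ) (hζ : IsPrimitiveRoot ζ n)
    (F : IntermediateField ℚ ℂ) (hF : F = IntermediateField.adjoin ℚ {ζ + ζ⁻¹})
    (p : ↥F) (hp : (p : ℂ) = 1 + ζ + ζ⁻¹) :
    Algebra.norm ℚ p = -2 ∧
    Algebra.norm ℚ (p - 2) = -2 ∧
    ∃ pO : NumberField.RingOfIntegers ↥F, (pO : ↥F) = p ∧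
      (Ideal.span {pO}).IsPrime ∧
      ∀ P : Ideal (NumberField.RingOfIntegers ↥F), P.IsPrime → P ≠ ⊥ →
        (2 : NumberField.RingOfIntegers ↥F) ∈ P → P = Ideal.span {pO} := by
  obtain ⟨k, rfl⟩ : ∃ k, s = k + 2 := ⟨s - 2, by omega⟩
  subst hn hF
  have hζ' : IsPrimitiveRoot ζ (6 * 2 ^ (k + 1)) := by convert hζ using 1; ring
  have hnorm1 : Algebra.norm ℚ p = -2 :=
    hζ'.norm_add_add_inv_eq_neg_two k.succ_ne_zero (one_pow 2) (by rw [hp, Rat.cast_one])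
  have hnorm2 : Algebra.norm ℚ (p - 2) = -2 :=
    hζ'.norm_add_add_inv_eq_neg_two k.succ_ne_zero (c := -1) (by norm_num)
      (by rw [← IntermediateField.algebraMap_apply, map_sub, map_ofNat,
        IntermediateField.algebraMap_apply, hp]; push_cast; ring)
  have hθ := hζ.isIntegral_add_inv (by positivity)
  have : FiniteDimensional ℚ ℚ⟮ζ + ζ⁻¹⟯ := adjoin.finiteDimensional hθ.tower_top
  have : NumberField ℚ⟮ζ + ζ⁻¹⟯ := ⟨⟩
  have hpint : IsIntegral ℤ p := by
    rw [← isIntegral_algebraMap_iff (algebraMap ℚ⟮ζ + ζ⁻¹⟯ ℂ).injective,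
      IntermediateField.algebraMap_apply, hp, add_assoc]
    exact isIntegral_one.add hθ
  let pO : 𝓞 ℚ⟮ζ + ζ⁻¹⟯ := ⟨p, hpint⟩
  have hpO : (Algebra.norm ℤ pO).natAbs.Prime := by
    rw [show Algebra.norm ℤ pO = -2 by exact_mod_cast (Algebra.coe_norm_int pO).trans hnorm1]
    norm_num
  exact ⟨hnorm1, hnorm2, pO, rfl, RingOfIntegers.isPrime_span_singleton_of_prime_natAbs_norm hpO,
    fun P _ _ h2 => hζ'.eq_span_singleton_of_two_mem (algebraMap _ ℂ) hp hpO h2⟩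

/-- For `n = 3·2^s`, `s ≥ 2`: `p'_n = 1 + ζ + ζ⁻¹` satisfies
`N_{F/ℚ}(p'_n) = -2`, `N_{F/ℚ}(p'_n - 2) = -2`, and `p'_n` generates the
unique prime of `F = ℚ(ζ + ζ⁻¹)` above `2`. -/
theorem one_add_zeta_generates_prime_above_two (s : ℕ) (hs : 2 ≤ s) (n : ℕ)
    (hn : n = 3 * 2 ^ s) (ζ : ℂ) (hζ : IsPrimitiveRoot ζ n)
    (F : IntermediateField ℚ ℂ) (hF : F = IntermediateField.adjoin ℚ {ζ + ζ⁻¹})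
    [FiniteDimensional ℚ ↥F]
    (p : ↥F) (hp : (p : ℂ) = 1 + ζ + ζ⁻¹) :
    Algebra.norm ℚ p = -2 ∧
    Algebra.norm ℚ (p - 2) = -2 ∧
    ∃ pO : NumberField.RingOfIntegers ↥F, (pO : ↥F) = p ∧
      (Ideal.span {pO}).IsPrime ∧
      ∀ P : Ideal (NumberField.RingOfIntegers ↥F), P.IsPrime → P ≠ ⊥ →
        (2 : NumberField.RingOfIntegers ↥F) ∈ P → P = Ideal.span {pO} :=
  one_add_zeta_generates_prime_above_two_general s hs n hn ζ hζ F hF p hp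
end

section
/- Let n = 2^s with n ≥ 8, ζ = ζ_n, and R⁺_n = ℤ[ζ + ζ⁻¹, 1/2]. Then the unit (1+ζ)(1+ζ⁻¹) = 2 + ζ + ζ⁻¹ of R⁺_n is not a square in the unit group of R⁺_n. -/
/-!
Write `c = ζ + ζ⁻¹` and `f t = t ^ 2 - 2`, so that `f^[j] c = ζ ^ 2 ^ j + ζ⁻¹ ^ 2 ^ j`.
Since `ζ ^ (n / 2) = -1`, the telescoping product
`(c ^ 2 - 4) * ∏ j < s - 2, (f^[j + 1] c + 2) = f^[s - 1] c - 2 = -4`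
exhibits `(c + 2)⁻¹` as an element of `ℤ[c, 1/2]`.

For the non-squareness, `(1 + ζ) * (1 + ζ⁻¹) = (1 + ζ) ^ 2 / ζ`, so a square root `w ∈ ℚ(ζ)`
would make `(1 + ζ) / w` a square root of `ζ`, hence a primitive `2n`-th root of unity in `ℚ(ζ)`.
This is impossible because `φ(2n) = 2 φ(n)` exceeds `[ℚ(ζ) : ℚ] = φ(n)` for even `n`.
-/

open Finset IntermediateField Module

section DoublingMap

variable {A : Type*} [CommRing A]

theorem iterate_sq_sub_two_add {x y : A} (hxy : x * y = 1) (j : ℕ) :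
    (fun t : A => t ^ 2 - 2)^[j] (x + y) = x ^ 2 ^ j + y ^ 2 ^ j := by
  induction j with
  | zero => simp
  | succ j ih =>
    have hxy' : x ^ 2 ^ j * y ^ 2 ^ j = 1 := by rw [← mul_pow, hxy, one_pow]
    rw [Function.iterate_succ_apply', ih, pow_succ 2 j, pow_mul x, pow_mul y]
    linear_combination 2 * hxy'

theorem sq_sub_four_mul_prod_iterate_sq_sub_two (c : A) (m : ℕ) :
    (c ^ 2 - 4) * ∏ j ∈ range m, ((fun t : A => t ^ 2 - 2)^[j + 1] c + 2) =
      (fun t : A => t ^ 2 - 2)^[m + 1] c - 2 := by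
  induction m with
  | zero => simp only [range_zero, prod_empty, mul_one, zero_add, Function.iterate_one]; ring
  | succ m ih =>
    rw [prod_range_succ, ← mul_assoc, ih, Function.iterate_succ_apply' _ (m + 1)]
    ring

theorem iterate_sq_sub_two_mem {S : Type*} [SetLike S A] [SubringClass S A] {T : S} {c : A}
    (hc : c ∈ T) (j : ℕ) : (fun t : A => t ^ 2 - 2)^[j] c ∈ T := by
  induction j with
  | zero => exact hc
  | succ j ih =>
    rw [Function.iterate_succ_apply']
    exact sub_mem (pow_mem ih 2) (ofNat_mem T 2)

end DoublingMap

theorem inv_add_two_mem_of_iterate_sq_sub_two_eq {K S : Type*} [Field K] [NeZero (2 : K)]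
    [SetLike S K] [SubringClass S K] {T : S} {c : K} (hc : c ∈ T) (h2 : (2 : K)⁻¹ ∈ T) {m : ℕ}
    (hm : (fun t : K => t ^ 2 - 2)^[m + 1] c = -2) : (c + 2)⁻¹ ∈ T := by
  set X := (c - 2) * ∏ j ∈ range m, ((fun t : K => t ^ 2 - 2)^[j + 1] c + 2)
  have hX : X ∈ T := mul_mem (sub_mem hc (ofNat_mem T 2))
    (prod_mem fun j _ => add_mem (iterate_sq_sub_two_mem hc _) (ofNat_mem T 2))
  have hcX : (c + 2) * X = -4 := by
    have := sq_sub_four_mul_prod_iterate_sq_sub_two c m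
    rw [hm] at this
    linear_combination this
  have hinv : (c + 2)⁻¹ = -(2⁻¹ * 2⁻¹) * X := by
    refine inv_eq_of_mul_eq_one_right ?_
    rw [mul_left_comm, hcX]
    field_simp
    norm_num
  rw [hinv]
  exact mul_mem (neg_mem (mul_mem h2 h2)) hX

theorem IsPrimitiveRoot.of_sq_of_even {M : Type*} [CommMonoid M] {v : M} {n : ℕ} (hn : Even n)
    (h : IsPrimitiveRoot (v ^ 2) n) : IsPrimitiveRoot v (2 * n) := by
  have hd := h.eq_orderOf
  rw [orderOf_pow' v two_ne_zero] at hd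
  rcases Nat.even_or_odd (orderOf v) with ⟨k, hk⟩ | hodd
  · rw [hk, Nat.gcd_eq_right (by omega)] at hd
    convert IsPrimitiveRoot.orderOf v using 1
    omega
  · rw [Nat.Coprime.gcd_eq_one hodd.coprime_two_right, Nat.div_one] at hd
    exact absurd (hd ▸ hn) (Nat.not_even_iff_odd.mpr hodd)

theorem finrank_adjoin_of_isPrimitiveRoot {K : Type*} [Field K] [CharZero K] {x : K} {k : ℕ}
    (hk : 0 < k) (hx : IsPrimitiveRoot x k) : finrank ℚ ℚ⟮x⟯ = k.totient := by
  rw [adjoin.finrank (hx.isIntegral hk).tower_top, ← Polynomial.cyclotomic_eq_minpoly_rat hx hk,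
    Polynomial.natDegree_cyclotomic]

theorem IsPrimitiveRoot.sq_ne_of_mem_adjoin {K : Type*} [Field K] [CharZero K] {ζ v : K}
    {n : ℕ} (hn : Even n) (hn0 : 0 < n) (hζ : IsPrimitiveRoot ζ n) (hv : v ∈ ℚ⟮ζ⟯) :
    v ^ 2 ≠ ζ := by
  rintro rfl
  have htot := Nat.totient_pos.mpr hn0
  have : FiniteDimensional ℚ ℚ⟮v ^ 2⟯ :=
    Module.finite_of_finrank_pos (finrank_adjoin_of_isPrimitiveRoot hn0 hζ ▸ htot)
  have hle := finrank_le_of_le_right (adjoin_simple_le_iff.mpr hv)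
  rw [finrank_adjoin_of_isPrimitiveRoot (by omega) (hζ.of_sq_of_even hn),
    finrank_adjoin_of_isPrimitiveRoot hn0 hζ,
    Nat.totient_mul_of_prime_of_dvd Nat.prime_two (even_iff_two_dvd.mp hn)] at hle
  omega

theorem mem_adjoin_simple_of_mem_adjoin_add_inv {K : Type*} [Field K] [CharZero K] {x w : K}
    (hw : w ∈ Algebra.adjoin ℤ ({x + x⁻¹, 2⁻¹} : Set K)) : w ∈ ℚ⟮x⟯ := by
  have hx := mem_adjoin_simple_self ℚ x
  refine Algebra.adjoin_le (S := ℚ⟮x⟯.toSubalgebra.restrictScalars ℤ) ?_ hw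
  rintro y (rfl | rfl)
  · exact (add_mem hx (inv_mem hx) : x + x⁻¹ ∈ ℚ⟮x⟯)
  · exact (inv_mem (ofNat_mem _ 2) : (2 : K)⁻¹ ∈ ℚ⟮x⟯)

/-- For `n = 2^s ≥ 8`: the unit `(1+ζ)(1+ζ⁻¹) = 2 + ζ + ζ⁻¹` of
`R⁺ = ℤ[ζ + ζ⁻¹, 1/2]` is not the square of a unit of `R⁺`. -/
theorem unit_not_square_two_power (s n : ℕ) (hn : n = 2 ^ s) (hn8 : 8 ≤ n)
    (ζ : ℂ) (hζ : IsPrimitiveRoot ζ n) :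
    (1 + ζ) * (1 + ζ⁻¹) = 2 + ζ + ζ⁻¹ ∧
    (1 + ζ) * (1 + ζ⁻¹) ∈ Algebra.adjoin ℤ ({ζ + ζ⁻¹, 2⁻¹} : Set ℂ) ∧
    ((1 + ζ) * (1 + ζ⁻¹))⁻¹ ∈ Algebra.adjoin ℤ ({ζ + ζ⁻¹, 2⁻¹} : Set ℂ) ∧
    ¬ ∃ w : ℂ, w ∈ Algebra.adjoin ℤ ({ζ + ζ⁻¹, 2⁻¹} : Set ℂ) ∧
      w⁻¹ ∈ Algebra.adjoin ℤ ({ζ + ζ⁻¹, 2⁻¹} : Set ℂ) ∧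
      w ^ 2 = (1 + ζ) * (1 + ζ⁻¹) := by
  subst hn
  obtain ⟨m, rfl⟩ : ∃ m, s = m + 2 :=
    ⟨s - 2, by have := (pow_le_pow_iff_right₀ one_lt_two).mp (by omega : 2 ^ 2 ≤ 2 ^ s); omega⟩
  have hζ0 : ζ ≠ 0 := hζ.ne_zero (by positivity)
  have hζ1 : 1 + ζ ≠ 0 := by
    intro h
    have := hζ.dvd_of_pow_eq_one 2 (by rw [eq_neg_of_add_eq_zero_right h]; norm_num)
    have := (pow_dvd_pow 2 (by omega : 2 ≤ m + 2)).trans this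
    norm_num at this
  have hζhalf : ζ ^ 2 ^ (m + 1) = -1 := by
    have := hζ.pow_of_dvd (by positivity) (pow_dvd_pow 2 (by omega : m + 1 ≤ m + 2))
    rw [Nat.pow_div (by omega) two_pos, show m + 2 - (m + 1) = 1 by omega, pow_one] at this
    exact this.eq_neg_one_of_two_right
  have hu : (1 + ζ) * (1 + ζ⁻¹) = ζ + ζ⁻¹ + 2 := by field_simp; ring
  have hc : ζ + ζ⁻¹ ∈ Algebra.adjoin ℤ ({ζ + ζ⁻¹, 2⁻¹} : Set ℂ) := Algebra.subset_adjoin (by simp)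
  refine ⟨by rw [hu]; ring, hu ▸ add_mem hc (ofNat_mem _ 2), ?_, ?_⟩
  · rw [hu]
    refine inv_add_two_mem_of_iterate_sq_sub_two_eq hc (Algebra.subset_adjoin (by simp)) (m := m) ?_
    rw [iterate_sq_sub_two_add (mul_inv_cancel₀ hζ0), inv_pow, hζhalf]
    norm_num
  · rintro ⟨w, hw, -, hw2⟩
    refine hζ.sq_ne_of_mem_adjoin (Nat.even_pow.mpr ⟨even_two, by omega⟩) (by positivity)
      (v := (1 + ζ) / w) (div_mem (add_mem (one_mem _) (mem_adjoin_simple_self ℚ ζ))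
        (mem_adjoin_simple_of_mem_adjoin_add_inv hw)) ?_
    rw [div_pow, hw2, show (1 + ζ) * (1 + ζ⁻¹) = (1 + ζ) ^ 2 / ζ by field_simp; ring]
    field_simp
end

section
/- Let O_L/O_M be a quadratic extension of Dedekind domains with fraction fields L/M, where L/M is a degree-2 field extension. For each nonzero ideal I of O_M, define O_I := O_M + I·O_L. Then O_I is a ring (an O_M-order in L), every O_M-order O with O_M ⊆ O ⊆ O_L equals O_I for some nonzero ideal I, the O_M-conductor of O_I is I, and O_J ⊆ O_I if and only if J ⊆ I. In particular the correspondence I ↦ O_I is an inclusion-preserving bijection between nonzero ideals of O_M and intermediate orders. -/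
/-- The `A`-submodule `O_I := A + I·O_L` of `L`, where `O_L` is the integral closure
of `A` in `L`. -/
def orderOfIdeal (A L : Type) [CommRing A] [CommRing L] [Algebra A L] (I : Ideal A) :
    Submodule A L :=
  Subalgebra.toSubmodule (⊥ : Subalgebra A L) ⊔ I • Subalgebra.toSubmodule (integralClosure A L)

/-!
Pick `θ ∈ O_L` outside `M` and let `π : L → M` be the `θ`-coordinate for the `M`-basis `(θ, 1)`
of `L`. Its kernel is `M`, which meets `O_L` exactly in `O_M` since `O_M` is integrally
closed; by the modular law, for `A`-submodules `O_M ⊆ N, N' ⊆ O_L` the inclusion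
`π N ⊆ π N'` already forces `N ⊆ N'`. Now `π O_I = I • q` with `q = π O_L` a nonzero finitely
generated, hence invertible, fractional ideal of `O_M`, so `I ↦ I • q` is an order isomorphism
from the ideals of `O_M` onto the submodules of `q`, and every claim follows.
-/

open Submodule nonZeroDivisors

theorem Submodule.ideal_smul_eq_map_mul {A M : Type*} [CommSemiring A] [Semiring M] [Algebra A M]
    (I : Ideal A) (q : Submodule A M) :
    I • q = map (Algebra.linearMap A M) I * q := by
  apply le_antisymm
  · refine smul_le.2 fun a ha x hx => ?_
    rw [Algebra.smul_def]
    exact mul_mem_mul (mem_map_of_mem ha) hx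
  · refine mul_le.2 fun _ ⟨a, ha, hy⟩ x hx => ?_
    rw [← hy, Algebra.linearMap_apply, ← Algebra.smul_def]
    exact smul_mem_smul ha hx

section Dedekind

variable {A M : Type*} [CommRing A] [Field M] [Algebra A M]

theorem FractionalIdeal.coe_coeIdeal_mul (I : Ideal A) (Q : FractionalIdeal A⁰ M) :
    ((I * Q : FractionalIdeal A⁰ M) : Submodule A M) = I • (Q : Submodule A M) := by
  rw [coe_mul, coe_coeIdeal, ideal_smul_eq_map_mul]
  rfl

variable [IsDedekindDomain A] [IsFractionRing A M]

theorem Submodule.smul_le_smul_iff_of_fg {q : Submodule A M} (hfg : q.FG) (hq : q ≠ ⊥)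
    {I J : Ideal A} : I • q ≤ J • q ↔ I ≤ J := by
  let Q : FractionalIdeal A⁰ M := ⟨q, FractionalIdeal.isFractional_of_fg hfg⟩
  have hQ : 0 < Q := pos_iff_ne_zero.2 fun h => hq (FractionalIdeal.coeToSubmodule_eq_bot.2 h)
  rw [← FractionalIdeal.coeIdeal_le_coeIdeal M, ← mul_le_mul_iff_left₀ hQ,
    ← FractionalIdeal.coe_le_coe, FractionalIdeal.coe_coeIdeal_mul,
    FractionalIdeal.coe_coeIdeal_mul]
  rfl

theorem Submodule.exists_ideal_smul_eq_of_le_of_fg {q N : Submodule A M} (hfg : q.FG)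
    (hq : q ≠ ⊥) (hN : N ≤ q) : ∃ I : Ideal A, I • q = N := by
  let Q : FractionalIdeal A⁰ M := ⟨q, FractionalIdeal.isFractional_of_fg hfg⟩
  have hQ : Q ≠ 0 := fun h => hq (FractionalIdeal.coeToSubmodule_eq_bot.2 h)
  let N' : FractionalIdeal A⁰ M := ⟨N, FractionalIdeal.isFractional_of_le (J := Q) hN⟩
  have hN' : N' * Q⁻¹ ≤ 1 := by
    simpa [mul_inv_cancel₀ hQ] using mul_left_mono (a := Q⁻¹) (show N' ≤ Q from hN)
  obtain ⟨I, hI⟩ := FractionalIdeal.le_one_iff_exists_coeIdeal.1 hN'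
  refine ⟨I, ?_⟩
  change I • (Q : Submodule A M) = N'
  rw [← FractionalIdeal.coe_coeIdeal_mul, hI, inv_mul_cancel_right₀ hQ]

end Dedekind

theorem Submodule.le_of_map_le_map_of_ker_inf_le {R V W : Type*} [Ring R] [AddCommGroup V]
    [Module R V] [AddCommGroup W] [Module R W] {f : V →ₗ[R] W} {T P P' : Submodule R V}
    (hker : LinearMap.ker f ⊓ T ≤ P') (hP : P ≤ T) (hP' : P' ≤ T) (h : map f P ≤ map f P') :
    P ≤ P' :=
  calc P ≤ (P' ⊔ LinearMap.ker f) ⊓ T :=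
        le_inf ((LinearMap.map_le_map_iff f).1 h) hP
    _ = P' ⊔ LinearMap.ker f ⊓ T := sup_inf_assoc_of_le _ hP'
    _ ≤ P' := sup_le le_rfl hker

section OrderOfIdeal

variable {A L : Type} [CommRing A] [CommRing L] [Algebra A L]

theorem orderOfIdeal_eq_one_sup (I : Ideal A) :
    orderOfIdeal A L I = 1 ⊔ I • (integralClosure A L).toSubmodule := by
  rw [orderOfIdeal, Algebra.toSubmodule_bot]

theorem orderOfIdeal_bot : orderOfIdeal A L ⊥ = 1 := by
  rw [orderOfIdeal_eq_one_sup, bot_smul, sup_bot_eq]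

theorem one_le_orderOfIdeal (I : Ideal A) : 1 ≤ orderOfIdeal A L I :=
  (orderOfIdeal_eq_one_sup I).ge.trans' le_sup_left

theorem orderOfIdeal_le_integralClosure (I : Ideal A) :
    orderOfIdeal A L I ≤ (integralClosure A L).toSubmodule :=
  sup_le (Subalgebra.toSubmodule.monotone bot_le) smul_le_right

theorem orderOfIdeal_mono : Monotone (orderOfIdeal A L) :=
  fun _ _ h => sup_le_sup_left (smul_mono_left h) _

theorem smul_mem_orderOfIdeal {I : Ideal A} {a : A} (ha : a ∈ I) {x : L}
    (hx : x ∈ integralClosure A L) : a • x ∈ orderOfIdeal A L I :=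
  mem_sup_right (smul_mem_smul ha hx)

theorem orderOfIdeal_mul_self_le (I : Ideal A) :
    orderOfIdeal A L I * orderOfIdeal A L I ≤ orderOfIdeal A L I := by
  rw [orderOfIdeal_eq_one_sup, ideal_smul_eq_map_mul]
  set J := map (Algebra.linearMap A L) I
  set T := (integralClosure A L).toSubmodule
  have hJ : J ≤ 1 := (one_eq_range (R := A) (A := L)).symm ▸ LinearMap.map_le_range
  have hJT : J * T * (J * T) ≤ J * T := by
    rw [mul_mul_mul_comm]
    exact mul_le_mul' (mul_le_of_le_one_right' hJ) (Subalgebra.isIdempotentElem_toSubmodule _).le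
  simp only [Submodule.mul_sup, Submodule.sup_mul, one_mul, mul_one]
  exact sup_le le_rfl (sup_le le_sup_right (le_sup_of_le_right hJT))

theorem exists_subalgebra_toSubmodule_eq_orderOfIdeal (I : Ideal A) :
    ∃ S : Subalgebra A L, S.toSubmodule = orderOfIdeal A L I ∧ S ≤ integralClosure A L :=
  ⟨(orderOfIdeal A L I).toSubalgebra (one_le.1 (one_le_orderOfIdeal I))
    (fun _ _ hx hy => orderOfIdeal_mul_self_le I (mul_mem_mul hx hy)), rfl,
    fun _ hx => orderOfIdeal_le_integralClosure I hx⟩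

end OrderOfIdeal

section Projection

variable {A M L : Type} [CommRing A] [Field M] [Algebra A M] [CommRing L] [Algebra A L]
  {π : L →ₗ[A] M}

theorem map_orderOfIdeal (hπ : 1 ≤ LinearMap.ker π) (I : Ideal A) :
    map π (orderOfIdeal A L I) = I • map π (integralClosure A L).toSubmodule := by
  rw [orderOfIdeal_eq_one_sup, Submodule.map_sup, LinearMap.le_ker_iff_map.1 hπ, bot_sup_eq,
    map_smul'']

variable [IsDedekindDomain A] [IsFractionRing A M]

theorem orderOfIdeal_le_orderOfIdeal_iff
    (hπ : LinearMap.ker π ⊓ (integralClosure A L).toSubmodule = 1)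
    (hfg : (map π (integralClosure A L).toSubmodule).FG)
    (hq : map π (integralClosure A L).toSubmodule ≠ ⊥) {I J : Ideal A} :
    orderOfIdeal A L J ≤ orderOfIdeal A L I ↔ J ≤ I := by
  refine ⟨fun h => ?_, fun h => orderOfIdeal_mono h⟩
  have hker : 1 ≤ LinearMap.ker π := hπ.ge.trans inf_le_left
  have := map_mono (f := π) h
  rwa [map_orderOfIdeal hker, map_orderOfIdeal hker, smul_le_smul_iff_of_fg hfg hq] at this

theorem smul_mem_orderOfIdeal_iff
    (hπ : LinearMap.ker π ⊓ (integralClosure A L).toSubmodule = 1)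
    (hfg : (map π (integralClosure A L).toSubmodule).FG)
    (hq : map π (integralClosure A L).toSubmodule ≠ ⊥) {I : Ideal A} {a : A} :
    (∀ x ∈ integralClosure A L, a • x ∈ orderOfIdeal A L I) ↔ a ∈ I := by
  refine ⟨fun h => ?_, fun ha x hx => smul_mem_orderOfIdeal ha hx⟩
  have hspan : orderOfIdeal A L (Ideal.span {a}) ≤ orderOfIdeal A L I := by
    rw [orderOfIdeal_eq_one_sup (Ideal.span {a})]
    refine sup_le (one_le_orderOfIdeal I) (smul_le.2 fun r hr x hx => ?_)
    obtain ⟨c, rfl⟩ := Ideal.mem_span_singleton'.1 hr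
    rw [mul_smul]
    exact (orderOfIdeal A L I).smul_mem c (h x hx)
  exact (Ideal.span_singleton_le_iff_mem I).1
    ((orderOfIdeal_le_orderOfIdeal_iff hπ hfg hq).1 hspan)

theorem exists_orderOfIdeal_eq
    (hπ : LinearMap.ker π ⊓ (integralClosure A L).toSubmodule = 1)
    (hfg : (map π (integralClosure A L).toSubmodule).FG)
    (hq : map π (integralClosure A L).toSubmodule ≠ ⊥)
    {O : Subalgebra A L} (hO : O ≤ integralClosure A L) :
    ∃ I : Ideal A, orderOfIdeal A L I = O.toSubmodule := by
  have hOT : O.toSubmodule ≤ (integralClosure A L).toSubmodule := hO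
  obtain ⟨I, hI⟩ := exists_ideal_smul_eq_of_le_of_fg hfg hq (map_mono (f := π) hOT)
  have hmap : map π (orderOfIdeal A L I) = map π O.toSubmodule := by
    rw [map_orderOfIdeal (hπ.ge.trans inf_le_left), hI]
  refine ⟨I, le_antisymm ?_ ?_⟩
  · exact le_of_map_le_map_of_ker_inf_le (hπ.trans_le (one_le.2 O.one_mem))
      (orderOfIdeal_le_integralClosure I) hOT hmap.le
  · exact le_of_map_le_map_of_ker_inf_le (hπ.trans_le (one_le_orderOfIdeal I)) hOT
      (orderOfIdeal_le_integralClosure I) hmap.ge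

end Projection

theorem exists_linearMap_ker_eq_span_singleton {K V : Type*} [Field K] [AddCommGroup V]
    [Module K V] (h2 : Module.finrank K V = 2) {v w : V} (hv : v ≠ 0) (hw : w ∉ K ∙ v) :
    ∃ f : V →ₗ[K] K, f w = 1 ∧ LinearMap.ker f = K ∙ v := by
  have hli : LinearIndependent K ![w, v] :=
    linearIndependent_fin2.2 ⟨hv, fun a ha => hw (mem_span_singleton.2 ⟨a, ha⟩)⟩
  have hcard : Fintype.card (Fin 2) = Module.finrank K V := by simp [h2]
  let b := basisOfLinearIndependentOfCardEqFinrank hli hcard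
  have hb : ⇑b = ![w, v] := coe_basisOfLinearIndependentOfCardEqFinrank hli hcard
  have hb0 : b 0 = w := by simp [hb]
  have hb1 : b 1 = v := by simp [hb]
  refine ⟨b.coord 0, by simp [← hb0], le_antisymm (fun x hx => ?_) ?_⟩
  · have hx0 : b.repr x 0 = 0 := hx
    have hsum := b.sum_repr x
    rw [Fin.sum_univ_two, hx0, zero_smul, zero_add, hb1] at hsum
    exact mem_span_singleton.2 ⟨_, hsum⟩
  · rw [span_singleton_le_iff_mem, LinearMap.mem_ker, ← hb1]
    simp

section Quadratic

variable {A M L : Type} [CommRing A] [Field M] [Algebra A M] [IsFractionRing A M]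
  [Field L] [Algebra M L] [Algebra A L] [IsScalarTower A M L]

theorem mem_one_of_isIntegral_of_mem_one [IsIntegrallyClosed A] {x : L} (hint : IsIntegral A x)
    (hx : x ∈ (1 : Submodule M L)) : x ∈ (1 : Submodule A L) := by
  obtain ⟨m, rfl⟩ := mem_one.1 hx
  obtain ⟨a, rfl⟩ := IsIntegrallyClosed.isIntegral_iff.1
    ((isIntegral_algebraMap_iff (algebraMap M L).injective).1 hint)
  exact mem_one.2 ⟨a, IsScalarTower.algebraMap_apply A M L a⟩

theorem exists_mem_integralClosure_notMem_one [IsDomain A] (h2 : Module.finrank M L = 2) :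
    ∃ θ ∈ integralClosure A L, θ ∉ (1 : Submodule M L) := by
  have : FiniteDimensional M L := Module.finite_of_finrank_pos (by omega)
  obtain ⟨x, hx⟩ : ∃ x : L, x ∉ (1 : Submodule M L) := by
    by_contra! h
    have : (⊥ : Subalgebra M L) = ⊤ :=
      top_unique fun x _ => by
        rw [← Subalgebra.mem_toSubmodule, Algebra.toSubmodule_bot]
        exact h x
    have := Subalgebra.bot_eq_top_iff_finrank_eq_one.1 this
    omega
  have hxalg : IsAlgebraic A x :=
    (IsFractionRing.isAlgebraic_iff A M L).2 (Algebra.IsAlgebraic.isAlgebraic x)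
  obtain ⟨y, hy, hint⟩ := hxalg.exists_integral_multiple
  refine ⟨y • x, hint, ?_⟩
  rwa [← algebraMap_smul M y x, smul_mem_iff _
    ((map_ne_zero_iff _ (IsFractionRing.injective A M)).2 hy)]

theorem exists_linearMap_ker_inf_integralClosure_eq_one [IsDomain A] [IsIntegrallyClosed A]
    (h2 : Module.finrank M L = 2) :
    ∃ π : L →ₗ[A] M, LinearMap.ker π ⊓ (integralClosure A L).toSubmodule = 1 ∧
      map π (integralClosure A L).toSubmodule ≠ ⊥ := by
  obtain ⟨θ, hθT, hθ⟩ := exists_mem_integralClosure_notMem_one (A := A) h2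
  rw [one_eq_span (R := M)] at hθ
  obtain ⟨π, hπθ, hker⟩ := exists_linearMap_ker_eq_span_singleton h2 one_ne_zero hθ
  refine ⟨π.restrictScalars A, le_antisymm ?_ (le_inf ?_ ?_), ?_⟩
  · rintro x ⟨hx, hxT⟩
    exact mem_one_of_isIntegral_of_mem_one hxT (by rw [one_eq_span (R := M), ← hker]; exact hx)
  · intro x hx
    obtain ⟨a, rfl⟩ := mem_one.1 hx
    show algebraMap A L a ∈ LinearMap.ker π
    rw [hker, IsScalarTower.algebraMap_apply A M L, ← one_eq_span]
    exact algebraMap_mem _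
  · exact one_le.2 (one_mem (integralClosure A L))
  · exact Submodule.ne_bot_iff _ |>.2 ⟨π θ, mem_map_of_mem hθT, by simp [hπθ]⟩

end Quadratic

theorem orders_in_quadratic_extension_general (A M L : Type) [CommRing A] [IsDedekindDomain A]
    [Field M] [Field L] [Algebra A M] [IsFractionRing A M]
    [Algebra M L] [Algebra A L] [IsScalarTower A M L]
    (h2 : Module.finrank M L = 2)
    [Module.Finite A (integralClosure A L)] :
    -- each `O_I` is a ring, i.e. an intermediate order
    (∀ I : Ideal A, I ≠ ⊥ → ∃ S : Subalgebra A L,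
        Subalgebra.toSubmodule S = orderOfIdeal A L I ∧ S ≤ integralClosure A L) ∧
    -- every intermediate order is of the form `O_I` for a nonzero ideal `I`
    (∀ O : Subalgebra A L, O ≠ ⊥ → O ≤ integralClosure A L →
        ∃ I : Ideal A, I ≠ ⊥ ∧ Subalgebra.toSubmodule O = orderOfIdeal A L I) ∧
    -- the `O_M`-conductor of `O_I` is exactly `I`
    (∀ I : Ideal A, I ≠ ⊥ → ∀ a : A,
        ((∀ x : L, x ∈ integralClosure A L → a • x ∈ orderOfIdeal A L I) ↔ a ∈ I)) ∧
    -- the correspondence preserves (and reflects) inclusions; in particular injective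
    (∀ I J : Ideal A, I ≠ ⊥ → J ≠ ⊥ →
        (orderOfIdeal A L J ≤ orderOfIdeal A L I ↔ J ≤ I)) := by
  obtain ⟨π, hπ, hq⟩ := exists_linearMap_ker_inf_integralClosure_eq_one (A := A) h2
  have hfg : (map π (integralClosure A L).toSubmodule).FG :=
    (Module.Finite.iff_fg.1 ‹Module.Finite A (integralClosure A L)›).map π
  refine ⟨fun I _ => exists_subalgebra_toSubmodule_eq_orderOfIdeal I, fun O hO hOT => ?_,
    fun I _ a => smul_mem_orderOfIdeal_iff hπ hfg hq,
    fun I J _ _ => orderOfIdeal_le_orderOfIdeal_iff hπ hfg hq⟩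
  obtain ⟨I, hI⟩ := exists_orderOfIdeal_eq hπ hfg hq hOT
  refine ⟨I, ?_, hI.symm⟩
  rintro rfl
  exact hO (Subalgebra.toSubmodule_injective
    (by rw [← hI, orderOfIdeal_bot, Algebra.toSubmodule_bot]))

/-- Classification of orders in a quadratic extension of Dedekind domains:
`I ↦ O_I = O_M + I·O_L` is an inclusion-preserving bijection between nonzero ideals of
`O_M` and intermediate orders, each `O_I` is a ring, every intermediate order is some
`O_I`, and the `O_M`-conductor of `O_I` is `I`. -/
theorem orders_in_quadratic_extension (A M L : Type) [CommRing A] [IsDedekindDomain A]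
    [Field M] [Field L] [Algebra A M] [IsFractionRing A M]
    [Algebra M L] [Algebra A L] [IsScalarTower A M L]
    (h2 : Module.finrank M L = 2)
    [IsDedekindDomain (integralClosure A L)]
    [Module.Finite A (integralClosure A L)] :
    -- each `O_I` is a ring, i.e. an intermediate order
    (∀ I : Ideal A, I ≠ ⊥ → ∃ S : Subalgebra A L,
        Subalgebra.toSubmodule S = orderOfIdeal A L I ∧ S ≤ integralClosure A L) ∧
    -- every intermediate order is of the form `O_I` for a nonzero ideal `I`
    (∀ O : Subalgebra A L, O ≠ ⊥ → O ≤ integralClosure A L →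
        ∃ I : Ideal A, I ≠ ⊥ ∧ Subalgebra.toSubmodule O = orderOfIdeal A L I) ∧
    -- the `O_M`-conductor of `O_I` is exactly `I`
    (∀ I : Ideal A, I ≠ ⊥ → ∀ a : A,
        ((∀ x : L, x ∈ integralClosure A L → a • x ∈ orderOfIdeal A L I) ↔ a ∈ I)) ∧
    -- the correspondence preserves (and reflects) inclusions; in particular injective
    (∀ I J : Ideal A, I ≠ ⊥ → J ≠ ⊥ →
        (orderOfIdeal A L J ≤ orderOfIdeal A L I ↔ J ≤ I)) :=
  orders_in_quadratic_extension_general A M L h2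
end

section
/- Let O_L/O_M be a quadratic extension of Dedekind domains with Gal(L/M) = ⟨σ⟩ of order 2. Define the antitrace ATr(x) = x - σ(x) and A = ATr(O_L). Then for every nonzero ideal I of O_M, the order O_I = O_M + I·O_L satisfies O_I = {x ∈ O_L : ATr(x) ∈ I·A}, and A is a projective O_M-module of rank 1. -/
/-- The antitrace `ATr(x) = x - σ(x)` as an `A`-linear map on `L`. -/
def antitrace (A M L : Type) [CommRing A] [Field M] [Field L] [Algebra A M]
    [Algebra M L] [Algebra A L] [IsScalarTower A M L] (σ : L ≃ₐ[M] L) : L →ₗ[A] L :=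
  (LinearMap.id - σ.toLinearMap).restrictScalars A

/-!
`L/M` has at most two automorphisms, so it is Galois with group `{1, σ}` and the kernel of
`ATr` is `M`. As `ATr` is `O_M`-linear and kills `O_M`, an `x ∈ O_L` has `ATr x ∈ ATr (I·O_L)`
exactly when `x - y ∈ M ∩ O_L = O_M` for some `y ∈ I·O_L`, i.e. when `x ∈ O_I`.

Since `σ² = 1`, `σ` acts by `-1` on the image of `ATr`, so every quotient `ATr x / ATr y` is
`σ`-fixed and lies in `M`. Hence `ATr(O_L)` lies on an `M`-line and is isomorphic to a nonzero
finitely generated `O_M`-submodule of `M`, i.e. to an invertible fractional ideal, which is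
projective of rank one.
-/

open scoped nonZeroDivisors

namespace Submodule

variable {A K : Type} [CommRing A] [Field K] [Algebra A K]

theorem projective_of_fg [IsDedekindDomain A] [IsFractionRing A K] {N : Submodule A K}
    (hN : N.FG) : Module.Projective A N := by
  let J : FractionalIdeal A⁰ K := ⟨N, FractionalIdeal.isFractional_of_fg hN⟩
  rcases eq_or_ne J 0 with hJ | hJ
  · obtain rfl : N = ⊥ := FractionalIdeal.coeToSubmodule_eq_bot.mpr hJ
    infer_instance
  · exact projective_of_isUnit ((Ne.isUnit hJ).map (FractionalIdeal.coeSubmoduleHom A⁰ K))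

theorem rank_eq_one_of_ne_bot [IsDomain A] [IsFractionRing A K] {N : Submodule A K}
    (hN : N ≠ ⊥) : Module.rank A N = 1 := by
  have : Nontrivial N := nontrivial_iff_ne_bot.mpr hN
  refine le_antisymm ?_ (Cardinal.one_le_iff_pos.mpr rank_pos)
  calc Module.rank A N ≤ Module.rank A K := N.rank_le
    _ = Module.rank K K := (IsFractionRing.rank_right_eq A K K).symm
    _ = 1 := Module.rank_self K

theorem exists_injective_of_le_span_singleton {M V : Type} [Field M] [AddCommGroup V]
    [Module M V] [Algebra A M] [Module A V] [IsScalarTower A M V] (P : Submodule A V) {w : V}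
    (hw : w ≠ 0) (hP : ∀ x ∈ P, x ∈ M ∙ w) : ∃ g : P →ₗ[A] M, Function.Injective g := by
  let f := (LinearMap.toSpanSingleton M V w).restrictScalars A
  have hf : Function.Injective f := smul_left_injective M hw
  have hPf : P ≤ LinearMap.range f := fun x hx => mem_span_singleton.mp (hP x hx)
  exact ⟨(LinearEquiv.ofInjective f hf).symm.toLinearMap ∘ₗ inclusion hPf,
    (LinearEquiv.ofInjective f hf).symm.injective.comp (inclusion_injective hPf)⟩

end Submodule

theorem Module.projective_and_rank_eq_one_of_injective {A K P : Type} [CommRing A]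
    [IsDedekindDomain A] [Field K] [Algebra A K] [IsFractionRing A K] [AddCommGroup P]
    [Module A P] [Module.Finite A P] [Nontrivial P] (g : P →ₗ[A] K)
    (hg : Function.Injective g) : Module.Projective A P ∧ Module.rank A P = 1 := by
  let e := LinearEquiv.ofInjective g hg
  have hfg : (LinearMap.range g).FG := by
    rw [LinearMap.range_eq_map]
    exact Module.Finite.fg_top.map g
  have hne : LinearMap.range g ≠ ⊥ := Submodule.nontrivial_iff_ne_bot.mp e.symm.nontrivial
  have := Submodule.projective_of_fg hfg
  exact ⟨.of_equiv e.symm, e.rank_eq.trans (Submodule.rank_eq_one_of_ne_bot hne)⟩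

namespace AlgEquiv

variable {M L : Type} [Field M] [Field L] [Algebra M L] {σ : L ≃ₐ[M] L}

theorem eq_one_or_eq_of_finrank_eq_two (h2 : Module.finrank M L = 2) (hσ : σ ≠ 1)
    (τ : L ≃ₐ[M] L) : τ = 1 ∨ τ = σ := by
  have : FiniteDimensional M L := .of_finrank_eq_succ h2
  classical
  have := Fintype.ofFinite (L ≃ₐ[M] L)
  have hcard : Fintype.card (L ≃ₐ[M] L) ≤ 2 := calc
    Fintype.card (L ≃ₐ[M] L) ≤ Nat.card (L →ₐ[M] L) := by
      rw [Fintype.card_eq_nat_card]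
      exact Nat.card_le_card_of_injective _ coe_toAlgHom_injective
    _ ≤ 2 := h2 ▸ card_algHom_le_finrank M L L
  by_contra! h
  have h3 : ({1, σ, τ} : Finset (L ≃ₐ[M] L)).card = 3 :=
    Finset.card_eq_three.mpr ⟨1, σ, τ, hσ.symm, h.1.symm, h.2.symm, rfl⟩
  have := Finset.card_le_univ ({1, σ, τ} : Finset (L ≃ₐ[M] L))
  omega

theorem isGalois_of_finrank_eq_two (h2 : Module.finrank M L = 2) (hσ : σ ≠ 1) :
    IsGalois M L := by
  have : FiniteDimensional M L := .of_finrank_eq_succ h2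
  refine IsGalois.of_card_aut_eq_finrank M L ?_
  rw [h2, Nat.card_eq_two_iff]
  exact ⟨1, σ, hσ.symm, Set.eq_univ_of_forall (eq_one_or_eq_of_finrank_eq_two h2 hσ)⟩

theorem mul_self_eq_one_of_finrank_eq_two (h2 : Module.finrank M L = 2) (hσ : σ ≠ 1) :
    σ * σ = 1 :=
  (eq_one_or_eq_of_finrank_eq_two h2 hσ (σ * σ)).resolve_right fun h => hσ (mul_eq_left.mp h)

theorem mem_range_algebraMap_of_apply_eq (h2 : Module.finrank M L = 2) (hσ : σ ≠ 1) {z : L}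
    (hz : σ z = z) : z ∈ Set.range (algebraMap M L) := by
  have : FiniteDimensional M L := .of_finrank_eq_succ h2
  have := isGalois_of_finrank_eq_two h2 hσ
  refine (IsGalois.mem_range_algebraMap_iff_fixed z).mpr fun τ => ?_
  rcases eq_one_or_eq_of_finrank_eq_two h2 hσ τ with rfl | rfl
  · rfl
  · exact hz

end AlgEquiv

section Antitrace

variable {A M L : Type} [CommRing A] [Field M] [Field L] [Algebra A M] [Algebra M L]
  [Algebra A L] [IsScalarTower A M L] {σ : L ≃ₐ[M] L}

theorem antitrace_apply (x : L) : antitrace A M L σ x = x - σ x := rfl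

theorem antitrace_eq_zero_iff {x : L} : antitrace A M L σ x = 0 ↔ σ x = x :=
  sub_eq_zero.trans eq_comm

theorem antitrace_algebraMap (a : A) : antitrace A M L σ (algebraMap A L a) = 0 := by
  rw [antitrace_eq_zero_iff, IsScalarTower.algebraMap_apply A M L, AlgEquiv.commutes]

theorem apply_antitrace (hσ : σ * σ = 1) (x : L) :
    σ (antitrace A M L σ x) = -antitrace A M L σ x := by
  rw [antitrace_apply, map_sub, ← AlgEquiv.mul_apply, hσ, AlgEquiv.one_apply, neg_sub]

theorem exists_isIntegral_antitrace_ne_zero [IsDomain A] [IsFractionRing A M]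
    [FiniteDimensional M L] (hσ : σ ≠ 1) : ∃ y : L, IsIntegral A y ∧ antitrace A M L σ y ≠ 0 := by
  obtain ⟨y, hy⟩ : ∃ y : L, σ y ≠ y := by
    by_contra! h
    exact hσ (AlgEquiv.ext h)
  obtain ⟨c, hc, hcy⟩ := ((IsFractionRing.isAlgebraic_iff A M L).mpr
    (.of_finite M y)).exists_integral_multiple
  refine ⟨c • y, hcy, ?_⟩
  have hc' : algebraMap A L c ≠ 0 := by
    rw [IsScalarTower.algebraMap_apply A M L]
    exact (map_ne_zero _).mpr (IsFractionRing.to_map_ne_zero_of_mem_nonZeroDivisors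
      (mem_nonZeroDivisors_of_ne_zero hc))
  rw [map_smul, Algebra.smul_def]
  exact mul_ne_zero hc' (mt antitrace_eq_zero_iff.mp hy)

variable (hfix : ∀ z : L, σ z = z → z ∈ Set.range (algebraMap M L))
include hfix

theorem antitrace_mem_span_antitrace (hσ : σ * σ = 1) {y : L} (hy : antitrace A M L σ y ≠ 0)
    (x : L) : antitrace A M L σ x ∈ M ∙ antitrace A M L σ y := by
  obtain ⟨m, hm⟩ := hfix (antitrace A M L σ x / antitrace A M L σ y) <| by
    rw [map_div₀, apply_antitrace hσ, apply_antitrace hσ, neg_div_neg_eq]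
  refine Submodule.mem_span_singleton.mpr ⟨m, ?_⟩
  rw [Algebra.smul_def, hm, div_mul_cancel₀ _ hy]

theorem mem_bot_of_isIntegral_of_antitrace_eq_zero [IsDomain A] [IsIntegrallyClosed A]
    [IsFractionRing A M] {x : L} (hx : IsIntegral A x) (h : antitrace A M L σ x = 0) :
    x ∈ (⊥ : Subalgebra A L) := by
  obtain ⟨m, rfl⟩ := hfix x (antitrace_eq_zero_iff.mp h)
  obtain ⟨a, rfl⟩ := IsIntegrallyClosed.isIntegral_iff.mp
    ((isIntegral_algebraMap_iff (algebraMap M L).injective).mp hx)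
  exact Algebra.mem_bot.mpr ⟨a, IsScalarTower.algebraMap_apply A M L a⟩

theorem mem_orderOfIdeal_iff [IsDomain A] [IsIntegrallyClosed A] [IsFractionRing A M]
    (I : Ideal A) (x : L) :
    x ∈ orderOfIdeal A L I ↔ x ∈ integralClosure A L ∧ antitrace A M L σ x ∈
      I • (Subalgebra.toSubmodule (integralClosure A L)).map (antitrace A M L σ) := by
  rw [← Submodule.map_smul'']
  constructor
  · intro hx
    obtain ⟨b, hb, c, hc, rfl⟩ := Submodule.mem_sup.mp hx
    obtain ⟨a, rfl⟩ := Algebra.mem_bot.mp hb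
    refine ⟨add_mem isIntegral_algebraMap (Submodule.smul_le_right hc), ?_⟩
    rw [map_add, antitrace_algebraMap, zero_add]
    exact Submodule.mem_map_of_mem hc
  · rintro ⟨hx, y, hy, hxy⟩
    have hyint : IsIntegral A y := Submodule.smul_le_right hy
    refine Submodule.mem_sup.mpr ⟨x - y, ?_, y, hy, sub_add_cancel x y⟩
    exact mem_bot_of_isIntegral_of_antitrace_eq_zero hfix (hx.sub hyint)
      (by rw [map_sub, hxy, sub_self])

end Antitrace

theorem order_eq_antitrace_preimage_general (A M L : Type) [CommRing A] [IsDedekindDomain A]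
    [Field M] [Field L] [Algebra A M] [IsFractionRing A M]
    [Algebra M L] [Algebra A L] [IsScalarTower A M L]
    (h2 : Module.finrank M L = 2)
    [Module.Finite A (integralClosure A L)]
    (σ : L ≃ₐ[M] L) (hσ : σ ≠ AlgEquiv.refl) :
    (∀ I : Ideal A, I ≠ ⊥ → ∀ x : L,
      (x ∈ orderOfIdeal A L I ↔ x ∈ integralClosure A L ∧
        antitrace A M L σ x ∈
          I • Submodule.map (antitrace A M L σ)
            (Subalgebra.toSubmodule (integralClosure A L)))) ∧
    Module.Projective A
      ↥(Submodule.map (antitrace A M L σ) (Subalgebra.toSubmodule (integralClosure A L))) ∧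
    Module.rank A
      ↥(Submodule.map (antitrace A M L σ) (Subalgebra.toSubmodule (integralClosure A L))) = 1 := by
  have : FiniteDimensional M L := .of_finrank_eq_succ h2
  have hσ2 := AlgEquiv.mul_self_eq_one_of_finrank_eq_two h2 hσ
  have hfix := fun z => AlgEquiv.mem_range_algebraMap_of_apply_eq h2 hσ (z := z)
  set 𝒜 := (Subalgebra.toSubmodule (integralClosure A L)).map (antitrace A M L σ)
  obtain ⟨y, hyint, hy⟩ := exists_isIntegral_antitrace_ne_zero (A := A) hσ
  have : Module.Finite A (Subalgebra.toSubmodule (integralClosure A L)) :=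
    inferInstanceAs (Module.Finite A (integralClosure A L))
  have : Nontrivial 𝒜 :=
    ⟨⟨_, Submodule.mem_map_of_mem hyint⟩, 0, fun h => hy (congrArg Subtype.val h)⟩
  obtain ⟨g, hg⟩ := 𝒜.exists_injective_of_le_span_singleton hy fun _ ⟨x, _, hx⟩ =>
    hx ▸ antitrace_mem_span_antitrace hfix hσ2 hy x
  exact ⟨fun I _ x => mem_orderOfIdeal_iff hfix I x,
    Module.projective_and_rank_eq_one_of_injective g hg⟩

/-- With `𝒜 = ATr(O_L)`: `O_I = {x ∈ O_L : ATr(x) ∈ I·𝒜}`, and `𝒜` is a projective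
`O_M`-module of rank `1`. -/
theorem order_eq_antitrace_preimage (A M L : Type) [CommRing A] [IsDedekindDomain A]
    [Field M] [Field L] [Algebra A M] [IsFractionRing A M]
    [Algebra M L] [Algebra A L] [IsScalarTower A M L]
    (h2 : Module.finrank M L = 2)
    [IsDedekindDomain (integralClosure A L)]
    [Module.Finite A (integralClosure A L)]
    (σ : L ≃ₐ[M] L) (hσ : σ ≠ AlgEquiv.refl)
    (hgal : ∀ τ : L ≃ₐ[M] L, τ = AlgEquiv.refl ∨ τ = σ) :
    (∀ I : Ideal A, I ≠ ⊥ → ∀ x : L,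
      (x ∈ orderOfIdeal A L I ↔ x ∈ integralClosure A L ∧
        antitrace A M L σ x ∈
          I • Submodule.map (antitrace A M L σ)
            (Subalgebra.toSubmodule (integralClosure A L)))) ∧
    Module.Projective A
      ↥(Submodule.map (antitrace A M L σ) (Subalgebra.toSubmodule (integralClosure A L))) ∧
    Module.rank A
      ↥(Submodule.map (antitrace A M L σ) (Subalgebra.toSubmodule (integralClosure A L))) = 1 :=
  order_eq_antitrace_preimage_general A M L h2 σ hσ
end

section
/- Let Γ₀ be a group acting on a set S, and Γ ≤ Γ₀ a subgroup of finite index d. Define the mass of an orbit to be the reciprocal of the cardinality of the stabilizer of any representative (taken as 0 when the stabilizer is infinite), and the mass of the orbit set to be the sum of orbit masses. If all relevant stabilizers are finite and the orbit sets are finite, then the mass of Γ\S equals d times the mass of Γ₀\S. -/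
/-!
The `H`-orbits lying over the `G`-orbit of `x` correspond to the orbits of the stabilizer `G_x` on
`G ⧸ H`, via `gH ↦ H • g⁻¹x`. Corresponding stabilizers are conjugate by `g`: both are the
stabilizer of a point of `S × G ⧸ H` under the diagonal action of `G`, namely of `(x, gH)` and of
`(g⁻¹x, H)`. So the mass of the fibre over `G • x` is the mass of the finite group `G_x` acting on
the finite set `G ⧸ H`, which by the class equation is `[G : H] / |G_x|`; summing over the
`G`-orbits gives the theorem.
-/

open MulAction

namespace MulAction

section Mass

variable (G : Type*) [Group G] (S : Type*) [MulAction G S]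

-- An infinite stabilizer has `Nat.card` zero, so its orbit gets mass `0⁻¹ = 0`.
noncomputable def orbitMass (o : orbitRel.Quotient G S) : ℚ :=
  (Nat.card (stabilizer G o.out) : ℚ)⁻¹

noncomputable def mass : ℚ :=
  ∑ᶠ o, orbitMass G S o

variable {G S}

lemma orbitMass_mk (a : S) :
    orbitMass G S ⟦a⟧ = (Nat.card (stabilizer G a) : ℚ)⁻¹ := by
  rw [orbitMass, Nat.card_congr (stabilizerEquivStabilizerOfOrbitRel (Quotient.mk_out a)).toEquiv]

lemma mass_eq_card_div_card [Finite G] [Finite S] :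
    mass G S = Nat.card S / Nat.card G := by
  have : Fintype (orbitRel.Quotient G S) := Fintype.ofFinite _
  rw [mass, finsum_eq_sum_of_fintype, Nat.card_congr (selfEquivSigmaOrbitsQuotientStabilizer G S),
    Nat.card_sigma, Nat.cast_sum, Finset.sum_div]
  refine Finset.sum_congr rfl fun o _ => ?_
  have : (Nat.card (G ⧸ stabilizer G o.out) : ℚ) ≠ 0 := Nat.cast_ne_zero.mpr Nat.card_pos.ne'
  rw [orbitMass, ← (stabilizer G o.out).card_mul_index, Subgroup.index, Nat.cast_mul]
  field_simp

end Mass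

section Stabilizer

variable {G : Type*} [Group G] {S T : Type*} [MulAction G S] [MulAction G T]

lemma card_stabilizer_subgroup (K : Subgroup G) (a : S) :
    Nat.card (stabilizer K a) = Nat.card ↥(stabilizer G a ⊓ K) := by
  have : stabilizer K a = (stabilizer G a ⊓ K).subgroupOf K := by
    ext k
    simp [Subgroup.mem_subgroupOf, Subgroup.smul_def]
  rw [this]
  exact Nat.card_congr (Subgroup.subgroupOfEquivOfLe inf_le_right).toEquiv

lemma card_stabilizer_inf_stabilizer_smul (g : G) (a : S) (b : T) :
    Nat.card ↥(stabilizer G (g • a) ⊓ stabilizer G (g • b)) =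
      Nat.card ↥(stabilizer G a ⊓ stabilizer G b) := by
  rw [stabilizer_smul_eq_stabilizer_map_conj, stabilizer_smul_eq_stabilizer_map_conj,
    ← Subgroup.map_inf _ _ _ (MulAut.conj g).injective]
  exact Subgroup.card_map_of_injective (MulAut.conj g).injective

lemma card_stabilizer_coset_inf_stabilizer (H : Subgroup G) (g : G) (x : S) :
    Nat.card ↥(stabilizer G (g : G ⧸ H) ⊓ stabilizer G x) =
      Nat.card ↥(H ⊓ stabilizer G (g⁻¹ • x)) :=
  calc _ = Nat.card ↥(stabilizer G (g • ((1 : G) : G ⧸ H)) ⊓ stabilizer G (g • g⁻¹ • x)) := by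
        rw [smul_inv_smul, MulAction.Quotient.smul_mk, smul_eq_mul, mul_one]
    _ = _ := by rw [card_stabilizer_inf_stabilizer_smul, stabilizer_quotient]

end Stabilizer

section Fiber

variable {G : Type*} [Group G] {S : Type*} [MulAction G S] (H : Subgroup G)

def subgroupOrbitsToOrbits : orbitRel.Quotient H S → orbitRel.Quotient G S :=
  Quotient.map' id fun _ _ => (orbitRel_subgroup_le H ·)

variable (x : S)

def cosetToOrbit : G ⧸ H → orbitRel.Quotient H S :=
  Quotient.lift (fun g => ⟦g⁻¹ • x⟧) fun a b hab => by
    refine Quotient.sound ⟨⟨a⁻¹ * b, QuotientGroup.leftRel_apply.mp hab⟩, ?_⟩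
    simp [smul_smul, mul_assoc]

lemma cosetToOrbit_mk (g : G) : cosetToOrbit H x (g : G ⧸ H) = ⟦g⁻¹ • x⟧ := rfl

lemma cosetToOrbit_smul (k : stabilizer G x) (q : G ⧸ H) :
    cosetToOrbit H x (k • q) = cosetToOrbit H x q := by
  induction q using QuotientGroup.induction_on with | H g => ?_
  show cosetToOrbit H x ((k * g : G) : G ⧸ H) = _
  rw [cosetToOrbit_mk, cosetToOrbit_mk, mul_inv_rev, mul_smul, inv_smul_eq_iff.mpr k.2.symm]

def stabilizerOrbitsToOrbits :
    orbitRel.Quotient (stabilizer G x) (G ⧸ H) → orbitRel.Quotient H S :=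
  Quotient.lift (cosetToOrbit H x) fun _ _ ⟨k, hk⟩ => hk ▸ cosetToOrbit_smul H x k _

lemma stabilizerOrbitsToOrbits_mk (g : G) :
    stabilizerOrbitsToOrbits H x ⟦(g : G ⧸ H)⟧ = ⟦g⁻¹ • x⟧ := rfl

lemma subgroupOrbitsToOrbits_stabilizerOrbitsToOrbits (ω) :
    subgroupOrbitsToOrbits H (stabilizerOrbitsToOrbits H x ω) = ⟦x⟧ := by
  induction ω using Quotient.inductionOn with | h q => ?_
  induction q using QuotientGroup.induction_on with | H g => ?_
  exact Quotient.sound ⟨g⁻¹, rfl⟩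

lemma stabilizerOrbitsToOrbits_injective :
    Function.Injective (stabilizerOrbitsToOrbits H x) := by
  intro ω ω' hωω'
  induction ω using Quotient.inductionOn with | h q => ?_
  induction ω' using Quotient.inductionOn with | h q' => ?_
  induction q using QuotientGroup.induction_on with | H g => ?_
  induction q' using QuotientGroup.induction_on with | H g' => ?_
  obtain ⟨h, hh : h • g'⁻¹ • x = g⁻¹ • x⟩ := Quotient.exact hωω'
  have hk : (g * h * g'⁻¹) • x = x := by
    rw [mul_smul, mul_smul, ← Subgroup.smul_def, hh, smul_inv_smul]
  refine Quotient.sound ⟨⟨g * h * g'⁻¹, hk⟩, ?_⟩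
  show ((g * h * g'⁻¹ * g' : G) : G ⧸ H) = g
  rw [inv_mul_cancel_right, QuotientGroup.mk_mul_of_mem _ h.2]

lemma exists_stabilizerOrbitsToOrbits_eq {o : orbitRel.Quotient H S}
    (ho : subgroupOrbitsToOrbits H o = ⟦x⟧) : ∃ ω, stabilizerOrbitsToOrbits H x ω = o := by
  induction o using Quotient.inductionOn with | h y => ?_
  obtain ⟨g, rfl⟩ := Quotient.exact ho
  exact ⟨⟦((g⁻¹ : G) : G ⧸ H)⟧, by rw [stabilizerOrbitsToOrbits_mk, inv_inv]⟩

noncomputable def stabilizerOrbitsEquivFiber :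
    orbitRel.Quotient (stabilizer G x) (G ⧸ H) ≃
      {o : orbitRel.Quotient H S // subgroupOrbitsToOrbits H o = ⟦x⟧} :=
  Equiv.ofBijective (fun ω => ⟨_, subgroupOrbitsToOrbits_stabilizerOrbitsToOrbits H x ω⟩)
    ⟨fun _ _ h => stabilizerOrbitsToOrbits_injective H x (congrArg Subtype.val h),
      fun ⟨_, ho⟩ => (exists_stabilizerOrbitsToOrbits_eq H x ho).imp fun _ => Subtype.ext⟩

lemma orbitMass_stabilizerOrbitsToOrbits (ω) :
    orbitMass H S (stabilizerOrbitsToOrbits H x ω) = orbitMass (stabilizer G x) (G ⧸ H) ω := by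
  induction ω using Quotient.inductionOn with | h q => ?_
  induction q using QuotientGroup.induction_on with | H g => ?_
  rw [stabilizerOrbitsToOrbits_mk, orbitMass_mk, orbitMass_mk, card_stabilizer_subgroup]
  -- `stabilizer G x` acts on `G ⧸ H` by `mulLeftCosetsCompSubtypeVal`, not by the restricted action.
  erw [card_stabilizer_subgroup (stabilizer G x) (g : G ⧸ H)]
  rw [card_stabilizer_coset_inf_stabilizer, inf_comm]

lemma finsum_fiber_orbitMass [H.FiniteIndex] [Finite (stabilizer G x)] :
    ∑ᶠ o : {o : orbitRel.Quotient H S // subgroupOrbitsToOrbits H o = ⟦x⟧}, orbitMass H S o =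
      H.index * orbitMass G S ⟦x⟧ :=
  calc _ = ∑ᶠ ω, orbitMass H S (stabilizerOrbitsToOrbits H x ω) :=
        (finsum_comp_equiv (stabilizerOrbitsEquivFiber H x)).symm
    _ = mass (stabilizer G x) (G ⧸ H) := finsum_congr (orbitMass_stabilizerOrbitsToOrbits H x)
    _ = Nat.card (G ⧸ H) / Nat.card (stabilizer G x) := mass_eq_card_div_card
    _ = H.index * orbitMass G S ⟦x⟧ := by rw [orbitMass_mk, Subgroup.index, div_eq_mul_inv]

end Fiber

end MulAction

/-- Mass is multiplicative in coverings: if `Γ ≤ Γ₀` has finite index `d` and both act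
on `S` (the `Γ`-action by restriction) with finite stabilizers and finitely many orbits,
then the mass of `Γ\S` equals `d` times the mass of `Γ₀\S`, where the mass of an orbit
is the reciprocal of the cardinality of the stabilizer of a representative. -/
theorem mass_multiplicative_in_coverings (G : Type) [Group G] (S : Type) [MulAction G S]
    (H : Subgroup G) (d : ℕ) (hd : H.index = d) (hd0 : d ≠ 0)
    [∀ x : S, Finite (MulAction.stabilizer G x)]
    [Finite (Quotient (MulAction.orbitRel G S))]
    [Finite (Quotient (MulAction.orbitRel H S))] :
    ∑ᶠ o : Quotient (MulAction.orbitRel H S),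
        ((Nat.card (MulAction.stabilizer H (Quotient.out o)) : ℚ))⁻¹ =
      (d : ℚ) * ∑ᶠ o : Quotient (MulAction.orbitRel G S),
        ((Nat.card (MulAction.stabilizer G (Quotient.out o)) : ℚ))⁻¹ := by
  classical
  have : H.FiniteIndex := ⟨hd ▸ hd0⟩
  have := Fintype.ofFinite (orbitRel.Quotient G S)
  have := Fintype.ofFinite (orbitRel.Quotient H S)
  calc mass H S
      = ∑ c, ∑ o : {o // subgroupOrbitsToOrbits H o = c}, orbitMass H S o.1 := by
        rw [mass, finsum_eq_sum_of_fintype, ← Fintype.sum_fiberwise (subgroupOrbitsToOrbits H)]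
    _ = ∑ c, H.index * orbitMass G S c := by
        refine Finset.sum_congr rfl fun c _ => ?_
        obtain ⟨x, rfl⟩ := Quotient.mk_surjective c
        rw [← finsum_eq_sum_of_fintype, finsum_fiber_orbitMass]
    _ = d * mass G S := by
        rw [mass, finsum_eq_sum_of_fintype, Finset.mul_sum, hd]
end

section
/- Let Γ act on a k-regular tree Δ with finite vertex and edge stabilizer groups, and let gr = Γ\Δ be the quotient graph. Then for every vertex v of gr with finite stabilizer mass m(v), one has k·m(v) = Σ_{e ∈ Star(v)} m(e), where Star(v) is the set of edges of gr with origin v and m(e) is the mass of the edge e. -/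
/-- Local mass relation: if `Γ` acts on a `k`-regular tree `Δ` (with edge set `E`,
edge-reversal `bar`, origin map `src`, underlying simple graph a tree) with finite
vertex and edge stabilizers, then for every vertex `v` of the quotient graph,
`k·m(v) = Σ_{e ∈ Star(v)} m(e)`, the sum being over quotient edges with origin `v`. -/
theorem star_mass_relation (G : Type) [Group G] (V E : Type)
    [MulAction G V] [MulAction G E]
    (bar : E → E) (src : E → V)
    (hbar : ∀ e, bar (bar e) = e) (hbne : ∀ e, bar e ≠ e)
    (hsrc_smul : ∀ (g : G) (e : E), src (g • e) = g • src e)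
    (hbar_smul : ∀ (g : G) (e : E), bar (g • e) = g • bar e)
    (hinj : ∀ e e' : E, src e = src e' → src (bar e) = src (bar e') → e = e')
    (Δ : SimpleGraph V)
    (hΔ : ∀ v w : V, Δ.Adj v w ↔ ∃ e, src e = v ∧ src (bar e) = w)
    (htree : Δ.IsTree)
    (k : ℕ) (hreg : ∀ v : V, Nat.card {e : E // src e = v} = k)
    [∀ v : V, Finite (MulAction.stabilizer G v)]
    [∀ e : E, Finite (MulAction.stabilizer G e)]
    (v : V) :
    (k : ℚ) * (Nat.card (MulAction.stabilizer G v) : ℚ)⁻¹ =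
      ∑ᶠ (ebar : Quotient (MulAction.orbitRel G E))
        (_ : src (Quotient.out ebar) ∈ MulAction.orbit G v),
        (Nat.card (MulAction.stabilizer G (Quotient.out ebar)) : ℚ)⁻¹ := by
  classical
  set Q := Quotient (MulAction.orbitRel G E) with hQ
  set q : E → Q := Quotient.mk (MulAction.orbitRel G E) with hq
  set S : Set E := {e | src e = v} with hSdef
  set T : Set Q := {ebar | src (Quotient.out ebar) ∈ MulAction.orbit G v} with hTdef
  set f : Q → ℚ := fun ebar => (Nat.card (MulAction.stabilizer G (Quotient.out ebar)) : ℚ)⁻¹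
    with hf
  set H : Subgroup G := MulAction.stabilizer G v with hH
  have hHpos : 0 < Nat.card H := Nat.card_pos
  set F : Q → Set E := fun ebar => {e | src e = v ∧ q e = ebar} with hF
  have hqout : ∀ ebar : Q, q (Quotient.out ebar) = ebar := fun ebar => Quotient.out_eq ebar
  have hq_eq : ∀ e e' : E, q e = q e' ↔ e ∈ MulAction.orbit G e' := by
    intro e e'
    constructor
    · intro h
      exact Quotient.exact h
    · intro h
      exact Quotient.sound h
  -- key: fibers over T are H-orbits
  have key : ∀ ebar ∈ T, ∃ e0 : E, src e0 = v ∧ q e0 = ebar ∧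
      F ebar = MulAction.orbit H e0 := by
    intro ebar hT
    obtain ⟨g, hg⟩ := hT
    simp only at hg
    refine ⟨g⁻¹ • Quotient.out ebar, ?_, ?_, ?_⟩
    · rw [hsrc_smul, ← hg]; simp
    · exact ((hq_eq _ _).mpr ⟨g⁻¹, rfl⟩).trans (hqout ebar)
    · have hsrc0 : src (g⁻¹ • Quotient.out ebar) = v := by rw [hsrc_smul, ← hg]; simp
      ext e
      simp only [hF, Set.mem_setOf_eq, MulAction.mem_orbit_iff]
      constructor
      · rintro ⟨hsv, hqe⟩
        rw [show ebar = q (Quotient.out ebar) from (hqout ebar).symm, hq_eq] at hqe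
        obtain ⟨g', hg'⟩ := hqe
        -- e = g' • out, want h • (g⁻¹ • out) = e with h ∈ H
        refine ⟨⟨g' * g, ?_⟩, ?_⟩
        · have : src e = (g' * g) • v := by
            rw [← hg', hsrc_smul, mul_smul, ← hg]
          rw [MulAction.mem_stabilizer_iff, ← this, hsv]
        · show (g' * g) • g⁻¹ • Quotient.out ebar = e
          rw [smul_smul, mul_assoc, mul_inv_cancel, mul_one]
          exact hg' 
      · rintro ⟨h, hh⟩
        have hh' : (h : G) • g⁻¹ • Quotient.out ebar = e := hh
        constructor
        · rw [← hh', hsrc_smul, hsrc0]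
          exact h.2
        · rw [show ebar = q (Quotient.out ebar) from (hqout ebar).symm, hq_eq, ← hh']
          exact ⟨(h : G) * g⁻¹, by show ((h : G) * g⁻¹) • _ = _; rw [mul_smul]⟩
  -- fibers over T are finite and have the right cardinality
  have hFfin : ∀ ebar ∈ T, (F ebar).Finite := by
    intro ebar hT
    obtain ⟨e0, _, _, hFe⟩ := key ebar hT
    rw [hFe]
    exact Set.finite_range _
  have hcard : ∀ ebar ∈ T, Nat.card (F ebar) * Nat.card (MulAction.stabilizer G
      (Quotient.out ebar)) = Nat.card H := by
    intro ebar hT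
    obtain ⟨e0, hs0, hq0, hFe⟩ := key ebar hT
    haveI : Fintype H := Fintype.ofFinite H
    haveI : Finite (MulAction.orbit H e0) := Set.finite_range _
    haveI : Fintype (MulAction.orbit H e0) := Fintype.ofFinite _
    haveI : Fintype (MulAction.stabilizer H e0) := Fintype.ofFinite _
    have hOS := MulAction.card_orbit_mul_card_stabilizer_eq_card_group H e0
    -- stabilizer H e0 ≃ stabilizer G e0
    have hEq1 : Nat.card (MulAction.stabilizer H e0) = Nat.card (MulAction.stabilizer G e0) := by
      refine Nat.card_congr ⟨fun h => ⟨h.1.1, h.2⟩, fun g => ⟨⟨g.1, ?_⟩, ?_⟩, ?_, ?_⟩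
      · have hge : g.1 • e0 = e0 := g.2
        rw [hH, MulAction.mem_stabilizer_iff, ← hs0, ← hsrc_smul, hge]
      · exact g.2
      · intro h; rfl
      · intro g; rfl
    -- stabilizer G e0 ≃ stabilizer G out
    have hrel : MulAction.orbitRel G E (Quotient.out ebar) e0 := by
      have : q (Quotient.out ebar) = q e0 := by rw [hqout, hq0]
      exact Quotient.exact this
    have hEq2 : Nat.card (MulAction.stabilizer G (Quotient.out ebar)) =
        Nat.card (MulAction.stabilizer G e0) :=
      Nat.card_congr (MulAction.stabilizerEquivStabilizerOfOrbitRel hrel).toEquiv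
    rw [hFe, hEq2, ← hEq1]
    rw [Nat.card_eq_fintype_card, Nat.card_eq_fintype_card, Nat.card_eq_fintype_card]
    exact hOS
  -- S is union of fibers; membership facts
  have hmemT : ∀ e ∈ S, q e ∈ T := by
    intro e he
    have : Quotient.out (q e) ∈ MulAction.orbit G e := by
      rw [← hq_eq, hqout]
    obtain ⟨g, hg⟩ := this
    show src (Quotient.out (q e)) ∈ MulAction.orbit G v
    rw [← hg, hsrc_smul, he]
    exact ⟨g, rfl⟩
  have hfne : ∀ ebar : Q, f ebar ≠ 0 := by
    intro ebar
    simp only [hf, ne_eq, inv_eq_zero, Nat.cast_eq_zero]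
    exact Nat.card_pos.ne'
  by_cases hS : S.Finite
  · -- main case
    set sF : Finset E := hS.toFinset with hsF
    set Tfin : Finset Q := sF.image q with hTfin
    have hT_eq : T = ↑Tfin := by
      ext ebar
      constructor
      · intro hT
        obtain ⟨e0, hs0, hq0, _⟩ := key ebar hT
        simp only [hTfin, Finset.coe_image, Set.mem_image, Finset.mem_coe]
        exact ⟨e0, by simp [hsF, Set.Finite.mem_toFinset, hSdef, hs0], hq0⟩
      · intro hmem
        simp only [hTfin, Finset.coe_image, Set.mem_image, Finset.mem_coe,
          Set.Finite.mem_toFinset] at hmem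
        obtain ⟨e, he, hqe⟩ := hmem
        rw [← hqe]
        exact hmemT e (by simpa [hsF] using he)
    have hkcard : k = sF.card := by
      rw [← hreg v]
      have : Nat.card {e : E // src e = v} = Nat.card S := rfl
      rw [this, Nat.card_coe_set_eq, Set.ncard_eq_toFinset_card S hS]
    have hfib : ∀ ebar : Q, Nat.card (F ebar) = (sF.filter fun e => q e = ebar).card := by
      intro ebar
      have : F ebar = ↑(sF.filter fun e => q e = ebar) := by
        ext e
        simp [hF, hsF, hSdef]
      rw [this, Nat.card_coe_set_eq, Set.ncard_coe_finset]
    have hterm : ∀ ebar ∈ Tfin, f ebar =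
        ((sF.filter fun e => q e = ebar).card : ℚ) * (Nat.card H : ℚ)⁻¹ := by
      intro ebar hmem
      have hT : ebar ∈ T := by rw [hT_eq]; exact hmem
      have hc := hcard ebar hT
      rw [hfib] at hc
      have hcQ : ((sF.filter fun e => q e = ebar).card : ℚ)
          * (Nat.card (MulAction.stabilizer G (Quotient.out ebar)) : ℚ) = (Nat.card H : ℚ) := by
        exact_mod_cast hc
      have hc0 : ((sF.filter fun e => q e = ebar).card : ℚ) ≠ 0 := by
        have : (sF.filter fun e => q e = ebar).card ≠ 0 := by
          intro h0
          rw [h0, zero_mul] at hc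
          omega
        exact_mod_cast this
      rw [hf, ← hcQ, mul_inv, ← mul_assoc, mul_inv_cancel₀ hc0, one_mul]
    calc (k : ℚ) * (Nat.card (MulAction.stabilizer G v) : ℚ)⁻¹
        = (sF.card : ℚ) * (Nat.card H : ℚ)⁻¹ := by rw [hkcard]
      _ = ((∑ ebar ∈ Tfin, (sF.filter fun e => q e = ebar).card : ℕ) : ℚ)
            * (Nat.card H : ℚ)⁻¹ := by
          rw [← Finset.card_eq_sum_card_image q sF]
      _ = ∑ ebar ∈ Tfin, ((sF.filter fun e => q e = ebar).card : ℚ) * (Nat.card H : ℚ)⁻¹ := by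
          rw [← Finset.sum_mul]; push_cast; ring
      _ = ∑ ebar ∈ Tfin, f ebar := by
          exact (Finset.sum_congr rfl hterm).symm
      _ = ∑ᶠ ebar ∈ (↑Tfin : Set Q), f ebar := (finsum_mem_coe_finset f Tfin).symm
      _ = ∑ᶠ ebar ∈ T, f ebar := by rw [hT_eq]
  · -- infinite case: both sides are zero
    have hTinf : T.Infinite := by
      intro hTf
      apply hS
      have : S ⊆ ⋃ ebar ∈ T, F ebar := by
        intro e he
        exact Set.mem_biUnion (hmemT e he) ⟨he, rfl⟩
      exact Set.Finite.subset (hTf.biUnion hFfin) this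
    have hk0 : k = 0 := by
      rw [← hreg v]
      haveI : Infinite {e : E // src e = v} := Set.infinite_coe_iff.mpr hS
      exact Nat.card_eq_zero_of_infinite
    have hRHS : ∑ᶠ ebar ∈ T, f ebar = 0 := by
      apply finsum_mem_eq_zero_of_infinite
      have : T ∩ Function.support f = T := by
        ext ebar
        simp [Function.mem_support, hfne ebar]
      rw [this]
      exact hTinf
    rw [hk0]
    show ((0 : ℕ) : ℚ) * _ = ∑ᶠ ebar ∈ T, f ebar
    rw [hRHS]
    simp
end

section
/- Let Γ act on a k-regular tree Δ with finite stabilizers and finite quotient gr = Γ\Δ. Then k · VM(gr) = 2 · EM(gr), where VM(gr) = Σ_{v ∈ Ver(gr)} m(v) is the total vertex mass and EM(gr) = (1/2) Σ_{e ∈ Ed(gr)} m(e) is the total edge mass. -/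
open MulAction

section Aux

variable (G : Type) [Group G] (V E : Type) [MulAction G V] [MulAction G E]

/-- The set of edges with source `v` lying in a given `G`-orbit is an orbit of the
stabilizer of `v`. -/
lemma orbit_fiber_eq (src : E → V) (hsrc_smul : ∀ (g : G) (e : E), src (g • e) = g • src e)
    (v : V) (e0 : E) (h0 : src e0 = v) :
    {e : E | src e = v ∧ Quotient.mk (orbitRel G E) e = Quotient.mk (orbitRel G E) e0}
      = MulAction.orbit (stabilizer G v) e0 := by
  ext e
  simp only [Set.mem_setOf_eq]
  constructor
  · rintro ⟨hsv, hrel⟩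
    have hrel' : orbitRel G E e e0 := Quotient.exact hrel
    rw [orbitRel_apply, mem_orbit_iff] at hrel'
    obtain ⟨g, rfl⟩ := hrel'
    have hg : g ∈ stabilizer G v := by
      rw [mem_stabilizer_iff, ← h0, ← hsrc_smul, h0, hsv]
    exact ⟨⟨g, hg⟩, rfl⟩
  · rintro ⟨h, rfl⟩
    refine ⟨?_, ?_⟩
    · show src ((h : G) • e0) = v
      rw [hsrc_smul, h0, h.2]
    · refine Quotient.sound (?_ : orbitRel G E ((h : G) • e0) e0)
      rw [orbitRel_apply, mem_orbit_iff]
      exact ⟨(h : G), rfl⟩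

/-- Orbit–stabilizer counting for the fiber of edges over a vertex. -/
lemma fiber_card_mul (src : E → V) (hsrc_smul : ∀ (g : G) (e : E), src (g • e) = g • src e)
    (v : V) (e0 : E) (h0 : src e0 = v) :
    Nat.card {e : E | src e = v ∧ Quotient.mk (orbitRel G E) e = Quotient.mk (orbitRel G E) e0}
      * Nat.card (stabilizer G e0) = Nat.card (stabilizer G v) := by
  rw [orbit_fiber_eq G V E src hsrc_smul v e0 h0]
  have hequiv : stabilizer (stabilizer G v) e0 ≃ stabilizer G e0 :=
    { toFun := fun x => ⟨(x.1 : G), x.2⟩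
      invFun := fun y => ⟨⟨(y : G), by
        rw [mem_stabilizer_iff, ← h0, ← hsrc_smul,
          show (y : G) • e0 = e0 from y.2]⟩, y.2⟩
      left_inv := fun x => rfl
      right_inv := fun y => rfl }
  calc Nat.card (MulAction.orbit (stabilizer G v) e0) * Nat.card (stabilizer G e0)
      = Nat.card (MulAction.orbit (stabilizer G v) e0)
          * Nat.card (stabilizer (stabilizer G v) e0) := by
        rw [Nat.card_congr hequiv]
    _ = Nat.card (MulAction.orbit (stabilizer G v) e0 × stabilizer (stabilizer G v) e0) := by
        rw [Nat.card_prod]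
    _ = Nat.card (stabilizer G v) := Nat.card_congr (orbitProdStabilizerEquivGroup _ e0)

end Aux

set_option maxHeartbeats 1000000 in
/-- Global mass relation: if `Γ` acts on a `k`-regular tree with finite stabilizers and
finite quotient graph `gr = Γ\Δ`, then `k · VM(gr) = 2 · EM(gr)`, where
`VM(gr) = Σ_v m(v)` and `EM(gr) = (1/2) Σ_e m(e)` (sums over quotient vertices and
oriented quotient edges, masses being reciprocals of stabilizer orders). -/
theorem vertex_mass_edge_mass_relation (G : Type) [Group G] (V E : Type)
    [MulAction G V] [MulAction G E]
    (bar : E → E) (src : E → V)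
    (hbar : ∀ e, bar (bar e) = e) (hbne : ∀ e, bar e ≠ e)
    (hsrc_smul : ∀ (g : G) (e : E), src (g • e) = g • src e)
    (hbar_smul : ∀ (g : G) (e : E), bar (g • e) = g • bar e)
    (hinj : ∀ e e' : E, src e = src e' → src (bar e) = src (bar e') → e = e')
    (Δ : SimpleGraph V)
    (hΔ : ∀ v w : V, Δ.Adj v w ↔ ∃ e, src e = v ∧ src (bar e) = w)
    (htree : Δ.IsTree)
    (k : ℕ) (hreg : ∀ v : V, Nat.card {e : E // src e = v} = k)
    [∀ v : V, Finite (MulAction.stabilizer G v)]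
    [∀ e : E, Finite (MulAction.stabilizer G e)]
    [Finite (Quotient (MulAction.orbitRel G V))]
    [Finite (Quotient (MulAction.orbitRel G E))] :
    (k : ℚ) * (∑ᶠ vbar : Quotient (MulAction.orbitRel G V),
        (Nat.card (MulAction.stabilizer G (Quotient.out vbar)) : ℚ)⁻¹) =
      2 * ((1 / 2) * ∑ᶠ ebar : Quotient (MulAction.orbitRel G E),
        (Nat.card (MulAction.stabilizer G (Quotient.out ebar)) : ℚ)⁻¹) := by
  classical
  haveI : Fintype (Quotient (orbitRel G V)) := Fintype.ofFinite _
  haveI : Fintype (Quotient (orbitRel G E)) := Fintype.ofFinite _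
  rw [finsum_eq_sum_of_fintype, finsum_eq_sum_of_fintype]
  rw [show ∀ x : ℚ, 2 * (1 / 2 * x) = x from fun x => by ring]
  -- stabilizer cardinalities are positive
  have hVne : ∀ v : V, (Nat.card (stabilizer G v) : ℚ) ≠ 0 := fun v => by
    exact_mod_cast (Nat.card_pos (α := stabilizer G v)).ne'
  -- the fibers
  set T : Quotient (orbitRel G V) → Quotient (orbitRel G E) → Set E :=
    fun a b => {e : E | src e = a.out ∧ Quotient.mk (orbitRel G E) e = b} with hT
  -- every fiber over `a = ⟦src b.out⟧` is nonempty
  have hex : ∀ b : Quotient (orbitRel G E),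
      (T (Quotient.mk (orbitRel G V) (src b.out)) b).Nonempty := by
    intro b
    have h1 : orbitRel G V (Quotient.mk (orbitRel G V) (src b.out)).out (src b.out) :=
      Quotient.mk_out _
    rw [orbitRel_apply, mem_orbit_iff] at h1
    obtain ⟨g, hg⟩ := h1
    refine ⟨g • b.out, ?_, ?_⟩
    · rw [hsrc_smul, hg]
    · have : orbitRel G E (g • b.out) b.out := by
        rw [orbitRel_apply, mem_orbit_iff]; exact ⟨g, rfl⟩
      calc Quotient.mk (orbitRel G E) (g • b.out)
          = Quotient.mk (orbitRel G E) b.out := Quotient.sound this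
        _ = b := Quotient.out_eq b
  -- nonempty fibers satisfy the orbit–stabilizer relation
  have hkey : ∀ (a : Quotient (orbitRel G V)) (b : Quotient (orbitRel G E)),
      (T a b).Nonempty →
      Nat.card (T a b) * Nat.card (stabilizer G b.out) = Nat.card (stabilizer G a.out) := by
    rintro a b ⟨e0, h0, hb⟩
    have hcard : Nat.card (stabilizer G b.out) = Nat.card (stabilizer G e0) := by
      refine Nat.card_congr (stabilizerEquivStabilizerOfOrbitRel ?_).toEquiv
      rw [← hb]; exact Quotient.mk_out e0
    rw [hcard, hT]
    simp only [← hb]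
    exact fiber_card_mul G V E src hsrc_smul a.out e0 h0
  -- fibers are finite
  have hTfin : ∀ a b, (T a b).Finite := by
    intro a b
    rcases Set.eq_empty_or_nonempty (T a b) with h | ⟨e0, h0, hb⟩
    · rw [h]; exact Set.finite_empty
    · rw [hT]
      simp only [← hb]
      rw [orbit_fiber_eq G V E src hsrc_smul a.out e0 h0]
      exact Set.finite_range _
  -- empty fibers off the diagonal
  have hzero : ∀ (a : Quotient (orbitRel G V)) (b : Quotient (orbitRel G E)),
      a ≠ Quotient.mk (orbitRel G V) (src b.out) → T a b = ∅ := by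
    intro a b hne
    rw [Set.eq_empty_iff_forall_notMem]
    rintro e ⟨h1, h2⟩
    apply hne
    have hrel : orbitRel G E b.out e := by rw [← h2]; exact Quotient.mk_out e
    rw [orbitRel_apply, mem_orbit_iff] at hrel
    obtain ⟨g, hg⟩ := hrel
    have : src b.out = g • src e := by rw [← hsrc_smul, hg]
    calc a = Quotient.mk (orbitRel G V) a.out := (Quotient.out_eq a).symm
      _ = Quotient.mk (orbitRel G V) (src e) := by rw [h1]
      _ = Quotient.mk (orbitRel G V) (src b.out) := by
          refine (Quotient.sound (?_ : orbitRel G V (src b.out) (src e))).symm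
          rw [orbitRel_apply, mem_orbit_iff]
          exact ⟨g, this.symm⟩
  -- the mass matrix
  set c : Quotient (orbitRel G V) → Quotient (orbitRel G E) → ℚ :=
    fun a b => (Nat.card (T a b) : ℚ) * (Nat.card (stabilizer G a.out) : ℚ)⁻¹ with hc
  -- column sums
  have hcol : ∀ b : Quotient (orbitRel G E),
      ∑ a, c a b = (Nat.card (stabilizer G b.out) : ℚ)⁻¹ := by
    intro b
    rw [Finset.sum_eq_single (Quotient.mk (orbitRel G V) (src b.out))]
    · have h := hkey _ b (hex b)
      have h' : (Nat.card (T (Quotient.mk (orbitRel G V) (src b.out)) b) : ℚ)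
          * (Nat.card (stabilizer G b.out) : ℚ)
          = (Nat.card (stabilizer G (Quotient.mk (orbitRel G V) (src b.out)).out) : ℚ) := by
        exact_mod_cast h
      have hTne : (Nat.card (T (Quotient.mk (orbitRel G V) (src b.out)) b) : ℚ) ≠ 0 := by
        intro h0
        rw [h0, zero_mul] at h'
        exact hVne _ h'.symm
      simp only [hc]
      rw [← h', mul_inv, ← mul_assoc, mul_inv_cancel₀ hTne, one_mul]
    · intro a _ hne
      rw [hc]
      simp only []
      rw [hzero a b hne]
      simp
    · intro h
      exact absurd (Finset.mem_univ _) h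
  -- row sums
  have hrow : ∀ a : Quotient (orbitRel G V),
      ∑ b, c a b = (k : ℚ) * (Nat.card (stabilizer G a.out) : ℚ)⁻¹ := by
    intro a
    rw [hc]
    simp only []
    rw [← Finset.sum_mul]
    congr 1
    -- ∑ b, |T a b| = k
    have hS : {e : E | src e = a.out} = ⋃ b, T a b := by
      ext e
      simp only [Set.mem_iUnion, hT, Set.mem_setOf_eq]
      exact ⟨fun h => ⟨Quotient.mk (orbitRel G E) e, h, rfl⟩, fun ⟨b, h, _⟩ => h⟩
    have hSfin : ({e : E | src e = a.out}).Finite := by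
      rw [hS]; exact Set.finite_iUnion (hTfin a)
    have hk : Nat.card {e : E | src e = a.out} = k := hreg a.out
    have hsum : ∑ b, Nat.card (T a b) = k := by
      rw [← hk, Nat.card_coe_set_eq, Set.ncard_eq_toFinset_card _ hSfin,
        Finset.card_eq_sum_card_fiberwise
          (f := fun e => Quotient.mk (orbitRel G E) e) (t := Finset.univ)
          (fun e _ => Finset.mem_univ _)]
      refine Finset.sum_congr rfl fun b _ => ?_
      rw [Nat.card_coe_set_eq, Set.ncard_eq_toFinset_card _ (hTfin a b)]
      congr 1
      ext e
      simp only [Finset.mem_filter, Set.Finite.mem_toFinset, Set.mem_setOf_eq, hT]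
    rw [← hsum]
    push_cast
    rfl
  rw [Finset.mul_sum]
  have step1 : (∑ a : Quotient (orbitRel G V),
      (k : ℚ) * (Nat.card (stabilizer G a.out) : ℚ)⁻¹)
      = ∑ a, ∑ b, c a b := Finset.sum_congr rfl fun a _ => (hrow a).symm
  rw [step1, Finset.sum_comm]
  exact Finset.sum_congr rfl fun b _ => hcol b
end

section
/- Let F be a totally real Galois extension of ℚ of degree 2^d. Suppose there exists α ∈ F with N_{F/ℚ}(α) < 0 such that the principal ideal (α) is fixed by Gal(F/ℚ). Then for every choice of 2^d signs (±1,…,±1) whose product is +1, there exists a unit of the ring of integers of F whose signs under the real embeddings of F are exactly the given ones. -/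
/-!
Fix a real embedding `ψ` of `F`. Every real embedding is `ψ ∘ σ` for a unique `σ ∈ G = Gal(F/ℚ)`,
so the sign pattern `s(x)` of `x ∈ Fˣ` is an element of `𝔽₂[G]`, and `s(σ x) = s(x) σ⁻¹`. The
sign patterns of units form an `𝔽₂`-subspace `V`. If `σ α = u α` with `u` a unit, then
`s(α) (σ⁻¹ - 1) = s(u) ∈ V`, hence `s(α) I ⊆ V` for the augmentation ideal `I`. As `N(α) < 0`,
`s(α)` has augmentation `1`, and in the group algebra of a `p`-group over `𝔽_p` such an element
`x` is invertible: a nonzero kernel of right multiplication by `x` would contain a nonzero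
`G`-fixed vector `b`, but fixed vectors satisfy `b x = aug(x) b = b`. So `V ⊇ I`, and `I` consists
exactly of the patterns with an even number of minus signs.
-/

open MonoidAlgebra NumberField

namespace MonoidAlgebra

section Augmentation

variable {k G : Type*} [CommRing k] [Group G]

-- The counit of the group bialgebra is the augmentation map.
local notation "ε" => Bialgebra.counitAlgHom k k[G]

theorem sub_counit_smul_one_mem_span (x : k[G]) :
    x - ε x • 1 ∈ Submodule.span k (Set.range fun g => of k G g - 1) := by
  induction x using MonoidAlgebra.induction_linear with
  | zero => simp
  | add x y hx hy =>
    convert add_mem hx hy using 1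
    rw [map_add, add_smul]; abel
  | single g c =>
    convert Submodule.smul_mem _ c (Submodule.subset_span (Set.mem_range_self g)) using 1
    simp [smul_sub, one_def]

theorem mem_span_of_sub_one_of_counit_eq_zero {x : k[G]} (hx : ε x = 0) :
    x ∈ Submodule.span k (Set.range fun g => of k G g - 1) := by
  simpa [hx] using sub_counit_smul_one_mem_span x

theorem mem_of_counit_eq_zero {V : Submodule k k[G]} {t : k[G]} (ht : IsUnit t)
    (hV : ∀ g, t * (of k G g - 1) ∈ V) {w : k[G]} (hw : ε w = 0) : w ∈ V := by
  obtain ⟨t, rfl⟩ := ht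
  have hspan : Submodule.span k (Set.range fun g => of k G g - 1) ≤
      V.comap (LinearMap.mulLeft k ↑t) := Submodule.span_le.mpr (Set.range_subset_iff.mpr hV)
  have hi : ε (↑t⁻¹ * w) = 0 := by rw [map_mul, hw, mul_zero]
  simpa using hspan (mem_span_of_sub_one_of_counit_eq_zero hi)

theorem mul_of_eq_self_of_forall_of_mul_eq_self {y : k[G]} (hy : ∀ g, of k G g * y = y)
    (h : G) : y * of k G h = y := by
  have hconst : ∀ a, y.coeff a = y.coeff 1 := fun a => by
    simpa using (congrArg (fun z => z.coeff a) (hy a)).symm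
  ext a
  simp [of_apply, hconst]

theorem mul_eq_counit_smul_of_forall_of_mul_eq_self {y : k[G]} (hy : ∀ g, of k G g * y = y)
    (x : k[G]) : y * x = ε x • y := by
  induction x using MonoidAlgebra.induction_linear with
  | zero => simp
  | add x z hx hz => rw [mul_add, hx, hz, map_add, add_smul]
  | single g c =>
    rw [← smul_of, mul_smul_comm, mul_of_eq_self_of_forall_of_mul_eq_self hy]
    simp

theorem isUnit_of_counit_eq_one {p : ℕ} [Fact p.Prime] [Finite G] (hG : IsPGroup p G)
    {x : (ZMod p)[G]} (hx : Bialgebra.counitAlgHom (ZMod p) (ZMod p)[G] x = 1) : IsUnit x := by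
  have : Finite (ZMod p)[G] := Module.finite_of_finite (ZMod p)
  let f := LinearMap.toSpanSingleton (ZMod p)[G] (ZMod p)[G] x
  suffices hK : LinearMap.ker f = ⊥ by
    obtain ⟨y, hy⟩ := Finite.injective_iff_surjective.mp (LinearMap.ker_eq_bot.mp hK) 1
    exact IsUnit.of_mul_eq_one_right y hy
  by_contra hK
  have : Nontrivial (LinearMap.ker f) := Submodule.nontrivial_iff_ne_bot.mpr hK
  have : Fintype (LinearMap.ker f) := Fintype.ofFinite _
  let : MulAction G (LinearMap.ker f) := MulAction.compHom _ (of (ZMod p) G)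
  have hpK : p ∣ Nat.card (LinearMap.ker f) := by
    rw [Nat.card_eq_fintype_card, Module.card_eq_pow_finrank (K := ZMod p), ZMod.card]
    exact dvd_pow_self p Module.finrank_pos.ne'
  obtain ⟨b, hb, hb0⟩ := hG.exists_fixed_point_of_prime_dvd_card_of_fixed_point _ hpK
    (a := 0) fun g => Subtype.ext (mul_zero (of (ZMod p) G g))
  have hbx := mul_eq_counit_smul_of_forall_of_mul_eq_self (fun g => congrArg Subtype.val (hb g)) x
  rw [hx, one_smul] at hbx
  have hb_ker : (b : (ZMod p)[G]) * x = 0 := b.2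
  exact hb0 (Subtype.ext (hbx.symm.trans hb_ker)).symm

end Augmentation
end MonoidAlgebra

noncomputable def signBit (x : ℝ) : ZMod 2 := if x < 0 then 1 else 0

theorem signBit_of_neg {x : ℝ} (hx : x < 0) : signBit x = 1 := if_pos hx

theorem signBit_of_nonneg {x : ℝ} (hx : 0 ≤ x) : signBit x = 0 := if_neg hx.not_gt

theorem signBit_mul {x y : ℝ} (hx : x ≠ 0) (hy : y ≠ 0) :
    signBit (x * y) = signBit x + signBit y := by
  rcases hx.lt_or_gt with hx | hx <;> rcases hy.lt_or_gt with hy | hy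
  · rw [signBit_of_nonneg (mul_pos_of_neg_of_neg hx hy).le, signBit_of_neg hx, signBit_of_neg hy]
    rfl
  · rw [signBit_of_neg (mul_neg_of_neg_of_pos hx hy), signBit_of_neg hx,
      signBit_of_nonneg hy.le, add_zero]
  · rw [signBit_of_neg (mul_neg_of_pos_of_neg hx hy), signBit_of_nonneg hx.le,
      signBit_of_neg hy, zero_add]
  · rw [signBit_of_nonneg (mul_pos hx hy).le, signBit_of_nonneg hx.le, signBit_of_nonneg hy.le,
      add_zero]

theorem signBit_prod {ι : Type*} (s : Finset ι) {f : ι → ℝ} (hf : ∀ i ∈ s, f i ≠ 0) :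
    signBit (∏ i ∈ s, f i) = ∑ i ∈ s, signBit (f i) := by
  classical
  induction s using Finset.induction_on with
  | empty => exact signBit_of_nonneg zero_le_one
  | insert a s ha ih =>
    rw [Finset.prod_insert ha, Finset.sum_insert ha, signBit_mul (hf a (s.mem_insert_self a))
      (Finset.prod_ne_zero_iff.mpr fun i hi => hf i (Finset.mem_insert_of_mem hi)),
      ih fun i hi => hf i (Finset.mem_insert_of_mem hi)]

theorem sign_eq_of_signBit_eq {x y : ℝ} (hx : x ≠ 0) (hy : y = 1 ∨ y = -1)
    (h : signBit x = signBit y) : Real.sign x = y := by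
  rcases hx.lt_or_gt with hx | hx <;> rcases hy with rfl | rfl
  · rw [signBit_of_neg hx, signBit_of_nonneg zero_le_one] at h
    exact absurd h (by decide)
  · exact Real.sign_of_neg hx
  · exact Real.sign_of_pos hx
  · rw [signBit_of_nonneg hx.le, signBit_of_neg (by norm_num)] at h
    exact absurd h (by decide)

section SignVector

variable {G : Type*} [Group G] [Fintype G]

noncomputable def signVector (f : G → ℝ) : (ZMod 2)[G] := ∑ g, signBit (f g) • of (ZMod 2) G g

theorem coeff_signVector (f : G → ℝ) (g : G) : (signVector f).coeff g = signBit (f g) := by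
  classical
  simp [signVector, coeff_sum, of_apply, Finsupp.single_apply]

theorem counit_signVector {f : G → ℝ} (hf : ∀ g, f g ≠ 0) :
    Bialgebra.counitAlgHom (ZMod 2) (ZMod 2)[G] (signVector f) = signBit (∏ g, f g) := by
  simp [signVector, signBit_prod _ fun g _ => hf g]

theorem signVector_mul {f₁ f₂ : G → ℝ} (hf₁ : ∀ g, f₁ g ≠ 0) (hf₂ : ∀ g, f₂ g ≠ 0) :
    signVector (f₁ * f₂) = signVector f₁ + signVector f₂ := by
  simp only [signVector, Pi.mul_apply, signBit_mul (hf₁ _) (hf₂ _), add_smul,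
    Finset.sum_add_distrib]

theorem signVector_comp_mul_right (f : G → ℝ) (h : G) :
    signVector (fun g => f (g * h)) = signVector f * of (ZMod 2) G h⁻¹ := by
  rw [signVector, signVector, Finset.sum_mul]
  refine Fintype.sum_equiv (Equiv.mulRight h) _ _ fun g => ?_
  simp

end SignVector

theorem bijective_comp_algEquiv {F : Type*} [Field F] [CharZero F] [Normal ℚ F] (ψ : F →+* ℝ) :
    Function.Bijective fun σ : Gal(F/ℚ) => ψ.comp (σ : F →+* F) := by
  refine ⟨fun σ τ h => AlgEquiv.ext fun x => ψ.injective (RingHom.congr_fun h x), fun φ => ?_⟩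
  let := ψ.toAlgebra
  exact ⟨AlgHom.restrictNormal' φ.toRatAlgHom F,
    RingHom.ext (AlgHom.restrictNormal_commutes φ.toRatAlgHom F)⟩

section RealSignature

variable {F : Type*} [Field F] [NumberField F] (ψ : F →+* ℝ)

noncomputable def signature (x : F) : (ZMod 2)[Gal(F/ℚ)] := signVector fun σ => ψ (σ x)

theorem signature_mul {x y : F} (hx : x ≠ 0) (hy : y ≠ 0) :
    signature ψ (x * y) = signature ψ x + signature ψ y := by
  rw [signature, signature, signature, ← signVector_mul (by simpa) (by simpa)]
  simp only [map_mul]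
  rfl

theorem signature_one : signature ψ 1 = 0 := by
  simpa using signature_mul ψ (one_ne_zero (α := F)) one_ne_zero

theorem signature_algEquiv (σ : Gal(F/ℚ)) (x : F) :
    signature ψ (σ x) = signature ψ x * of (ZMod 2) _ σ⁻¹ := by
  rw [signature, signature, ← signVector_comp_mul_right]
  simp only [AlgEquiv.mul_apply]

theorem prod_apply_algEquiv [IsGalois ℚ F] (x : F) :
    ∏ σ : Gal(F/ℚ), ψ (σ x) = Algebra.norm ℚ x := by
  rw [← map_prod, ← Algebra.norm_eq_prod_automorphisms, eq_ratCast (algebraMap ℚ F), map_ratCast]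

theorem counit_signature [IsGalois ℚ F] {x : F} (hx : x ≠ 0) :
    Bialgebra.counitAlgHom (ZMod 2) _ (signature ψ x) = signBit (Algebra.norm ℚ x) := by
  rw [signature, counit_signVector (by simpa), prod_apply_algEquiv]

noncomputable def unitSignatureHom : Additive (𝓞 F)ˣ →+ (ZMod 2)[Gal(F/ℚ)] where
  toFun u := signature ψ (u.toMul : 𝓞 F)
  map_zero' := by simpa using signature_one ψ
  map_add' u v := by simpa using signature_mul ψ (by simp) (by simp)

noncomputable def unitSignatures : Submodule (ZMod 2) (ZMod 2)[Gal(F/ℚ)] :=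
  AddSubgroup.toZModSubmodule 2 (unitSignatureHom ψ).range

theorem mem_unitSignatures {v : (ZMod 2)[Gal(F/ℚ)]} :
    v ∈ unitSignatures ψ ↔ ∃ u : (𝓞 F)ˣ, signature ψ (u : 𝓞 F) = v := by
  simp [unitSignatures, unitSignatureHom]

theorem signature_mul_of_sub_one_mem_unitSignatures {α : F} (hα : α ≠ 0) {σ : Gal(F/ℚ)}
    {u : (𝓞 F)ˣ} (hu : σ α = u * α) :
    signature ψ α * (of (ZMod 2) _ σ⁻¹ - 1) ∈ unitSignatures ψ := by
  rw [mem_unitSignatures]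
  refine ⟨u, ?_⟩
  rw [mul_sub, mul_one, ← signature_algEquiv, hu, signature_mul ψ (by simp) hα,
    add_sub_cancel_right]

end RealSignature

theorem units_of_all_even_signatures_general (F : Type) [Field F] [NumberField F] [IsGalois ℚ F]
    (d : ℕ) (hdeg : Module.finrank ℚ F = 2 ^ d)
    (α : F) (hα : α ≠ 0) (hneg : Algebra.norm ℚ α < 0)
    (hfix : ∀ g : F ≃ₐ[ℚ] F, ∃ u : (NumberField.RingOfIntegers F)ˣ,
      g α = ((u : NumberField.RingOfIntegers F) : F) * α)
    [Fintype (F →+* ℝ)]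
    (S : (F →+* ℝ) → ℝ) (hS : ∀ φ, S φ = 1 ∨ S φ = -1)
    (hprod : ∏ φ : F →+* ℝ, S φ = 1) :
    ∃ ε : (NumberField.RingOfIntegers F)ˣ, ∀ φ : F →+* ℝ,
      Real.sign (φ ((ε : NumberField.RingOfIntegers F) : F)) = S φ := by
  obtain _ | ⟨⟨ψ⟩⟩ := isEmpty_or_nonempty (F →+* ℝ)
  · exact ⟨1, isEmptyElim⟩
  have hG : IsPGroup 2 Gal(F/ℚ) :=
    IsPGroup.of_card (by rw [IsGalois.card_aut_eq_finrank, hdeg])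
  have hT : IsUnit (signature ψ α) := isUnit_of_counit_eq_one hG <| by
    rw [counit_signature ψ hα, signBit_of_neg (by exact_mod_cast hneg)]
  have hgen (g : Gal(F/ℚ)) : signature ψ α * (of (ZMod 2) _ g - 1) ∈ unitSignatures ψ := by
    obtain ⟨u, hu⟩ := hfix g⁻¹
    simpa using signature_mul_of_sub_one_mem_unitSignatures ψ hα hu
  have hS0 (φ : F →+* ℝ) : S φ ≠ 0 := by rcases hS φ with h | h <;> norm_num [h]
  have hw : Bialgebra.counitAlgHom (ZMod 2) _
      (signVector fun σ : Gal(F/ℚ) => S (ψ.comp σ)) = 0 := by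
    rw [counit_signVector fun σ => hS0 _,
      Fintype.prod_bijective _ (bijective_comp_algEquiv ψ) _ S fun _ => rfl, hprod,
      signBit_of_nonneg zero_le_one]
  obtain ⟨ε, hε⟩ := (mem_unitSignatures ψ).mp (mem_of_counit_eq_zero hT hgen hw)
  refine ⟨ε, fun φ => ?_⟩
  obtain ⟨σ, rfl⟩ := (bijective_comp_algEquiv ψ).2 φ
  refine sign_eq_of_signBit_eq (by simp) (hS _) ?_
  simpa [signature, coeff_signVector] using congrArg (fun v => v.coeff σ) hε

/-- Generalized Weber lemma: let `F/ℚ` be totally real Galois of degree `2^d`, and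
`α ∈ F` with `N_{F/ℚ}(α) < 0` whose principal ideal `(α)` is Galois-stable.  Then for
every sequence of signs `±1` indexed by the real embeddings of `F` whose product is `+1`,
there is a unit of `O_F` realizing exactly these signs. -/
theorem units_of_all_even_signatures (F : Type) [Field F] [NumberField F] [IsGalois ℚ F]
    (d : ℕ) (hdeg : Module.finrank ℚ F = 2 ^ d)
    (htotreal : ∀ (φ : F →+* ℂ) (x : F), (φ x).im = 0)
    (α : F) (hα : α ≠ 0) (hneg : Algebra.norm ℚ α < 0)
    (hfix : ∀ g : F ≃ₐ[ℚ] F, ∃ u : (NumberField.RingOfIntegers F)ˣ,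
      g α = ((u : NumberField.RingOfIntegers F) : F) * α)
    [Fintype (F →+* ℝ)]
    (S : (F →+* ℝ) → ℝ) (hS : ∀ φ, S φ = 1 ∨ S φ = -1)
    (hprod : ∏ φ : F →+* ℝ, S φ = 1) :
    ∃ ε : (NumberField.RingOfIntegers F)ˣ, ∀ φ : F →+* ℝ,
      Real.sign (φ ((ε : NumberField.RingOfIntegers F) : F)) = S φ :=
  units_of_all_even_signatures_general F d hdeg α hα hneg hfix S hS hprod
end
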